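/- arXiv:0801.2806 — 12 statements merged into one kernel-verified Lean document; each statement's English description precedes it below -/
import Mathlib

section
/- Let a, b, cLI ∈ ℂ with b ≠ 0, b ≠ 1, and a + b·n ≠ 0 for every integer n. Suppose f : ℤ × ℤ → ℂ satisfies, for all m, n, t ∈ ℤ, the relation f(m,t)·(a + t + m + b·n) − f(m, n+t)·(a + t + b·n) = m·f(n+m, t) + δ_{n+m,0}·(n² − n)·cLI (where δ_{n+m,0} is 1 if n + m = 0 and 0 otherwise). Then cLI = 0. -/
/-!
Write `x t = f (1, t)` and `y t = f (-1, t)`. The relation with `m = 0` makes `f (0, ·)` a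
constant `F`. The relations with `(m, n) = (1, -1), (1, -2)` express `y` through `x`, those with
`(m, n) = (-1, 1), (-1, 2)` express `x` through `y`; eliminating `y` gives
`b (1 - b) Δ₂² x = 4 c`, where `Δ₂` is the forward difference of step `2`. On the other hand the
relation with `(m, n) = (1, -1)` alone says that `t ↦ (a + 1 - b + t) x t` has constant first
difference. Multiplying a sequence of constant second difference `D` by an affine function raises
its degree, so this forces `D = 0`, i.e. `c = 0`.
-/

open fwdDiff

theorem eq_zero_of_fwdDiff_iter_two_eq_of_fwdDiff_affine_mul_eq {K : Type*} [Field K]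
    [CharZero K] {x : ℤ → K} {h : ℤ} (hh : h ≠ 0) {α D E : K}
    (hx : ∀ t, (Δ_[h])^[2] x t = D) (hp : ∀ t, Δ_[h] (fun s : ℤ => (α + s) * x s) t = E) :
    D = 0 := by
  simp only [Function.iterate_succ, Function.iterate_zero, Function.comp_apply, id, fwdDiff]
    at hx hp
  have hx₀ := hx 0
  have hx₁ := hx h
  have hp₀ := hp 0
  have hp₁ := hp h
  have hp₂ := hp (h + h)
  push_cast at hx₀ hx₁ hp₀ hp₁ hp₂
  simp only [zero_add] at hx₀ hx₁ hp₀ hp₁ hp₂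
  -- the third difference of `(α + ·) * x` vanishes and equals `3 h D`
  have : (3 * h : K) * D = 0 := by
    linear_combination hp₂ - 2 * hp₁ + hp₀ - (α + 3 * h) * hx₁ + α * hx₀
  simpa [hh] using this

/-- `f (m, t)` is the coefficient of `I(m) v_t = f (m, t) v_{m + t}`, and the relation is
`[L(n), I(m)] v_t = (m I(n + m) + δ_{n + m, 0} (n² - n) c) v_t`. -/
def BracketRelation {K : Type*} [Field K] (a b c : K) (f : ℤ × ℤ → K) : Prop :=
  ∀ m n t : ℤ, f (m, t) * (a + t + m + b * n) - f (m, n + t) * (a + t + b * n)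
    = m * f (n + m, t) + (if n + m = 0 then (1 : K) else 0) * (n ^ 2 - n) * c

namespace BracketRelation

variable {K : Type*} [Field K] {a b c : K} {f : ℤ × ℤ → K}

theorem apply_zero_left (hf : BracketRelation a b c f) (ha : ∀ n : ℤ, a + b * n ≠ 0) (t : ℤ) :
    f (0, t) = f (0, 0) := by
  have h := hf 0 t 0
  simp only [add_zero, Int.cast_zero, zero_mul, zero_add] at h
  have hδ : (if t = 0 then (1 : K) else 0) * ((t : K) ^ 2 - t) = 0 := by
    split_ifs with ht <;> simp [ht]
  have : (f (0, 0) - f (0, t)) * (a + b * t) = 0 := by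
    linear_combination h + c * hδ
  exact (sub_eq_zero.mp ((mul_eq_zero.mp this).resolve_right (ha t))).symm

theorem apply_neg_one (hf : BracketRelation a b c f) (hF : ∀ t, f (0, t) = f (0, 0)) (t : ℤ) :
    f (-1, t + 2) = 2 * f (0, 0) + 4 * c - b * f (1, t + 2) - (1 - b) * f (1, t) := by
  have e₂ := hf 1 (-2) (t + 2)
  have e₁ := hf 1 (-1) (t + 2)
  have e₁' := hf 1 (-1) (t + 1)
  norm_num [hF] at e₂ e₁ e₁'
  ring_nf at e₂ e₁ e₁' ⊢
  linear_combination e₁ + e₁' - e₂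

theorem apply_one (hf : BracketRelation a b c f) (hF : ∀ t, f (0, t) = f (0, 0)) (t : ℤ) :
    f (1, t) = 2 * f (0, 0) - b * f (-1, t) - (1 - b) * f (-1, t + 2) := by
  have e₂ := hf (-1) 2 t
  have e₁ := hf (-1) 1 t
  have e₁' := hf (-1) 1 (t + 1)
  norm_num [hF] at e₂ e₁ e₁'
  ring_nf at e₂ e₁ e₁' ⊢
  linear_combination e₂ - e₁ - e₁'

theorem fwdDiff_iter_two_apply_one (hf : BracketRelation a b c f)
    (hF : ∀ t, f (0, t) = f (0, 0)) (t : ℤ) :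
    (Δ_[2])^[2] (fun s : ℤ => b * (1 - b) * f (1, s)) t = 4 * c := by
  simp only [Function.iterate_succ, Function.iterate_zero, Function.comp_apply, id, fwdDiff]
  linear_combination -hf.apply_one hF (t + 2) + b * hf.apply_neg_one hF t
    + (1 - b) * hf.apply_neg_one hF (t + 2)

theorem fwdDiff_two_affine_mul_apply_one (hf : BracketRelation a b c f)
    (hF : ∀ t, f (0, t) = f (0, 0)) (t : ℤ) :
    Δ_[2] (fun s : ℤ => (a + 1 - b + s) * f (1, s)) t = 2 * (f (0, 0) + 2 * c) := by
  have e₂ := hf 1 (-1) (t + 2)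
  have e₁ := hf 1 (-1) (t + 1)
  simp only [fwdDiff]
  push_cast
  norm_num [hF] at e₂ e₁
  ring_nf at e₂ e₁ ⊢
  linear_combination e₂ + e₁

end BracketRelation

theorem stmt_0_general (a b cLI : ℂ)
    (ha : ∀ n : ℤ, a + b * n ≠ 0)
    (f : ℤ × ℤ → ℂ)
    (hf : ∀ m n t : ℤ,
      f (m, t) * (a + t + m + b * n) - f (m, n + t) * (a + t + b * n)
        = m * f (n + m, t) + (if n + m = 0 then (1 : ℂ) else 0) * (n ^ 2 - n) * cLI) :
    cLI = 0 := by
  have hf : BracketRelation a b cLI f := hf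
  have hF := hf.apply_zero_left ha
  have hp (t : ℤ) : Δ_[2] (fun s : ℤ => (a + 1 - b + s) * (b * (1 - b) * f (1, s))) t
      = b * (1 - b) * (2 * (f (0, 0) + 2 * cLI)) := by
    have := hf.fwdDiff_two_affine_mul_apply_one hF t
    simp only [fwdDiff] at this ⊢
    linear_combination b * (1 - b) * this
  have h4c := eq_zero_of_fwdDiff_iter_two_eq_of_fwdDiff_affine_mul_eq two_ne_zero
    (hf.fwdDiff_iter_two_apply_one hF) hp
  simpa using h4c

/-- Lemma 3.4(i), central-charge part: under the twisted Heisenberg–Virasoro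
relation with `b ≠ 0, 1` and `a + b n ≠ 0` for all integers `n`, the scalar
`cLI` by which `C_{LI}` acts is zero. -/
theorem stmt_0 (a b cLI : ℂ) (hb0 : b ≠ 0) (hb1 : b ≠ 1)
    (ha : ∀ n : ℤ, a + b * n ≠ 0)
    (f : ℤ × ℤ → ℂ)
    (hf : ∀ m n t : ℤ,
      f (m, t) * (a + t + m + b * n) - f (m, n + t) * (a + t + b * n)
        = m * f (n + m, t) + (if n + m = 0 then (1 : ℂ) else 0) * (n ^ 2 - n) * cLI) :
    cLI = 0 :=
  stmt_0_general a b cLI ha f hf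
end

section
/- Let a, b ∈ ℂ with b ≠ 0, b ≠ 1, and a + b·n ≠ 0 for every integer n. Suppose f : ℤ × ℤ → ℂ satisfies, for all m, n, t ∈ ℤ, f(m,t)·(a + t + m + b·n) − f(m, n+t)·(a + t + b·n) = m·f(n+m, t). Then f(m,t) = f(0,0) for all m, t ∈ ℤ. Moreover, if in addition there is a constant cI ∈ ℂ such that f(n,t)·f(m, n+t) − f(m,t)·f(n, m+t) = δ_{m+n,0}·n·cI for all m, n, t ∈ ℤ, then cI = 0. -/
/-!
Write `c = f (0, 0)`. Taking `t = 0` in the relation gives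
`(f (m, 0) - f (m, t)) (a + b t) = m (f (t + m, 0) - f (m, 0))`, so each row `f (m, ·)` is
constant as soon as `f (·, 0)` is; in particular `f (0, t) = c`. Eliminating `f (-k, k)` and
`f (-k, 2k)` from three more instances yields a linear relation between `g k = f (k, 0) - c` and
`g (-k)`; together with the same relation at `-k` this is a `2 × 2` system with determinant
`8 b (b - 1) k²`, which forces `g k = 0`. A constant `f` makes the left side of the Heisenberg
relation vanish, and `m = -1, n = 1` then gives `cI = 0`.
-/

/-- The relation `[L(n), I(m)] = m I(n + m)` on the module with `I(m) v_t = f (m, t) v_{m+t}`. -/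
def TwistedHVRelation (a b : ℂ) (f : ℤ × ℤ → ℂ) : Prop :=
  ∀ m n t : ℤ, f (m, t) * (a + t + m + b * n) - f (m, n + t) * (a + t + b * n) = m * f (n + m, t)

namespace TwistedHVRelation

variable {a b : ℂ} {f : ℤ × ℤ → ℂ}

theorem sub_mul_eq (hf : TwistedHVRelation a b f) (m t : ℤ) :
    (f (m, 0) - f (m, t)) * (a + b * t) = m * (f (t + m, 0) - f (m, 0)) := by
  have h := hf m t 0
  simp only [add_zero, Int.cast_zero] at h
  linear_combination h

theorem apply_eq_apply_zero (hf : TwistedHVRelation a b f) (ha : ∀ n : ℤ, a + b * n ≠ 0)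
    {m t : ℤ} (h : (m : ℂ) * (f (t + m, 0) - f (m, 0)) = 0) : f (m, t) = f (m, 0) := by
  have key := hf.sub_mul_eq m t
  rw [h] at key
  exact (sub_eq_zero.mp ((mul_eq_zero.mp key).resolve_right (ha t))).symm

theorem apply_zero_left (hf : TwistedHVRelation a b f) (ha : ∀ n : ℤ, a + b * n ≠ 0) (t : ℤ) :
    f (0, t) = f (0, 0) :=
  hf.apply_eq_apply_zero ha (by simp)

theorem column_relation (hf : TwistedHVRelation a b f) (ha : ∀ n : ℤ, a + b * n ≠ 0)
    {k : ℤ} (hk : k ≠ 0) :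
    (f (-k, 0) - f (0, 0)) * (a - k + 3 * b * k) + (f (k, 0) - f (0, 0)) * (a + k + b * k) = 0 := by
  have E1 := hf (-k) k k
  have E2 := hf (-k) k 0
  have E3 := hf (-k) (k + k) 0
  rw [show k + -k = 0 by ring, hf.apply_zero_left ha k] at E1
  rw [show k + -k = 0 by ring, add_zero] at E2
  rw [add_zero, show k + k + -k = k by ring] at E3
  push_cast at E1 E2 E3
  have hkC : (k : ℂ) ≠ 0 := Int.cast_ne_zero.mpr hk
  refine (mul_eq_zero.mp ?_).resolve_left hkC
  linear_combination (-(a + 2 * b * k)) * E1 + (-(a + 2 * b * k)) * E2 + (a + k + b * k) * E3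

theorem apply_zero_right (hf : TwistedHVRelation a b f) (hb0 : b ≠ 0) (hb1 : b ≠ 1)
    (ha : ∀ n : ℤ, a + b * n ≠ 0) (k : ℤ) : f (k, 0) = f (0, 0) := by
  rcases eq_or_ne k 0 with rfl | hk
  · rfl
  have R1 := hf.column_relation ha hk
  have R2 := hf.column_relation ha (neg_ne_zero.mpr hk)
  rw [neg_neg] at R2
  push_cast at R2
  have hdet : 8 * b * (b - 1) * (k : ℂ) ^ 2 ≠ 0 := by
    have hkC : (k : ℂ) ≠ 0 := Int.cast_ne_zero.mpr hk
    exact mul_ne_zero (mul_ne_zero (mul_ne_zero (by norm_num) hb0) (sub_ne_zero.mpr hb1))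
      (pow_ne_zero 2 hkC)
  refine sub_eq_zero.mp ((mul_eq_zero.mp ?_).resolve_left hdet)
  linear_combination (a - k - b * k) * R1 - (a - k + 3 * b * k) * R2

theorem apply_eq_apply_zero_zero (hf : TwistedHVRelation a b f) (hb0 : b ≠ 0) (hb1 : b ≠ 1)
    (ha : ∀ n : ℤ, a + b * n ≠ 0) (m t : ℤ) : f (m, t) = f (0, 0) := by
  have hcol := hf.apply_zero_right hb0 hb1 ha
  rw [hf.apply_eq_apply_zero ha (by rw [hcol (t + m), hcol m, sub_self, mul_zero]), hcol m]

end TwistedHVRelation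

/-- Lemma 3.4(i), constancy part: under the twisted Heisenberg–Virasoro
relation with `b ≠ 0, 1` and `a + b n ≠ 0` for all integers `n`, the function
`f` is constant, and if moreover the Heisenberg relation holds with central
scalar `cI`, then `cI = 0`. -/
theorem stmt_1 (a b : ℂ) (hb0 : b ≠ 0) (hb1 : b ≠ 1)
    (ha : ∀ n : ℤ, a + b * n ≠ 0)
    (f : ℤ × ℤ → ℂ)
    (hf : ∀ m n t : ℤ,
      f (m, t) * (a + t + m + b * n) - f (m, n + t) * (a + t + b * n)
        = m * f (n + m, t)) :
    (∀ m t : ℤ, f (m, t) = f (0, 0)) ∧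
    (∀ cI : ℂ,
      (∀ m n t : ℤ,
        f (n, t) * f (m, n + t) - f (m, t) * f (n, m + t)
          = (if m + n = 0 then (1 : ℂ) else 0) * n * cI) →
      cI = 0) := by
  have hconst : ∀ m t : ℤ, f (m, t) = f (0, 0) :=
    TwistedHVRelation.apply_eq_apply_zero_zero hf hb0 hb1 ha
  refine ⟨hconst, fun cI hrel => ?_⟩
  have h := hrel (-1) 1 0
  simp only [hconst, sub_self] at h
  simpa using h.symm
end

section
/- Let a, cI ∈ ℂ with a not an integer. Suppose f : ℤ × ℤ → ℂ satisfies, for all m, n, t ∈ ℤ, both (a + t + m)·f(m,t) − (a + t)·f(m, n+t) = m·f(m+n, t) and f(n,t)·f(m, n+t) − f(m,t)·f(n, m+t) = δ_{m+n,0}·n·cI. Then cI = 0, and either f(m,n) = f(0,0) for all m, n ∈ ℤ, or f(m,n) = ((a + n)/(a + m + n))·f(0,0) for all m, n ∈ ℤ. -/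
/-!
Setting `t = 0` in the first relation expresses every `f (m, n)` through the row `f (·, 0)`.
Feeding this back into the first relation with `m = 1` shows that `H k = (a + k) f (k, 0)`
satisfies `H (1 + x + y) + H 1 = H (1 + x) + H (1 + y)`, so `H` is affine and
`f (m, n) = l + u (a + n) / (a + m + n)`. For such `f` the left side of the second relation is
`l u m n (n - m) / ((a + t + m) (a + t + n) (a + t + m + n))`: the instance `(1, 2, 0)` forces
`l u = 0`, and then `(1, -1, 0)` forces `cI = 0`.
-/

theorem Int.apply_eq_of_add_add_eq {M : Type*} [AddCommGroup M] (H : ℤ → M) (b : ℤ)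
    (h : ∀ x y, H (b + x + y) + H b = H (b + x) + H (b + y)) (k : ℤ) :
    H k = H 0 + k • (H (b + 1) - H b) := by
  let P : ℤ →+ M := AddMonoidHom.mk' (fun x => H (b + x) - H b) fun x y => by
    rw [← add_assoc, eq_sub_of_add_eq (h x y)]; abel
  have hP (x : ℤ) : H (b + x) = H b + x • P 1 := by
    rw [← map_zsmul, smul_eq_mul, mul_one]
    exact (add_sub_cancel _ _).symm
  have hk := hP (k - b)
  have h0 := hP (-b)
  rw [add_sub_cancel] at hk
  rw [add_neg_cancel] at h0
  have hP1 : P 1 = H (b + 1) - H b := rfl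
  rw [hk, h0, sub_zsmul, neg_zsmul, hP1]
  abel

section

variable {a : ℂ}

theorem ne_zero_of_eq_add_intCast (ha : ∀ n : ℤ, a ≠ n) (k : ℤ) {z : ℂ} (hz : z = a + k) :
    z ≠ 0 := by
  rintro rfl
  exact ha (-k) (by push_cast; linear_combination -hz)

theorem exists_eq_add_mul_div_of_commutator (ha : ∀ n : ℤ, a ≠ n) {f : ℤ × ℤ → ℂ}
    (hf : ∀ m n t : ℤ,
      (a + t + m) * f (m, t) - (a + t) * f (m, n + t) = m * f (m + n, t)) :
    ∃ l u : ℂ, ∀ m n : ℤ, f (m, n) = l + u * ((a + n) / (a + m + n)) := by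
  have ha0 : a ≠ 0 := ne_zero_of_eq_add_intCast ha 0 (by simp)
  set H : ℤ → ℂ := fun k => (a + k) * f (k, 0)
  have hrow (m n : ℤ) : a * f (m, n) = (a + m) * f (m, 0) - m * f (m + n, 0) := by
    have := hf m n 0
    simp only [Int.cast_zero, add_zero] at this
    linear_combination -this
  have hpar (x y : ℤ) : H (1 + x + y) + H 1 = H (1 + x) + H (1 + y) := by
    have e1 := hrow 1 y
    have e2 := hrow 1 (x + y)
    have e3 := hrow (1 + x) y
    rw [← add_assoc] at e2
    simp only [H]
    push_cast at e1 e2 e3 ⊢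
    linear_combination a * hf 1 x y - (a + y + 1) * e1 + (a + y) * e2 + e3
  obtain ⟨δ, hδ⟩ : ∃ δ : ℂ, ∀ k : ℤ, H k = a * f (0, 0) + k * δ :=
    ⟨_, fun k => by simpa [H] using Int.apply_eq_of_add_add_eq H 1 hpar k⟩
  refine ⟨δ, f (0, 0) - δ, fun m n => ?_⟩
  have hne := ne_zero_of_eq_add_intCast ha (m + n) (z := a + m + n) (by push_cast; ring)
  have hm := hδ m
  have hmn := hδ (m + n)
  simp only [H] at hm hmn
  push_cast at hm hmn
  field_simp
  apply mul_left_cancel₀ ha0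
  linear_combination (a + m + n) * hrow m n + (a + m + n) * hm - m * hmn

theorem mul_sub_mul_eq_of_eq_add_mul_div (ha : ∀ n : ℤ, a ≠ n) {f : ℤ × ℤ → ℂ} {l u : ℂ}
    (hf : ∀ m n : ℤ, f (m, n) = l + u * ((a + n) / (a + m + n))) (m n t : ℤ) :
    f (n, t) * f (m, n + t) - f (m, t) * f (n, m + t)
      = l * u * (m * n * (n - m)) / ((a + t + m) * (a + t + n) * (a + t + m + n)) := by
  have hm := ne_zero_of_eq_add_intCast ha (t + m) (z := a + t + m) (by push_cast; ring)
  have hn := ne_zero_of_eq_add_intCast ha (t + n) (z := a + t + n) (by push_cast; ring)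
  have hmn := ne_zero_of_eq_add_intCast ha (t + m + n) (z := a + t + m + n) (by push_cast; ring)
  rw [hf, hf, hf, hf]
  push_cast
  rw [show a + n + t = a + t + n by ring, show a + m + t = a + t + m by ring,
    show a + m + (n + t) = a + t + m + n by ring, show a + n + (m + t) = a + t + m + n by ring]
  field_simp
  ring

end

/-- Lemma 3.4(ii), dichotomy (case `b = 0`, `a ∉ ℤ`): `cI = 0` and either `f`
is constant, or `f(m,n) = ((a+n)/(a+m+n)) f(0,0)` for all `m, n`. -/
theorem stmt_3 (a cI : ℂ) (ha : ∀ n : ℤ, a ≠ (n : ℂ))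
    (f : ℤ × ℤ → ℂ)
    (hf1 : ∀ m n t : ℤ,
      (a + t + m) * f (m, t) - (a + t) * f (m, n + t) = m * f (m + n, t))
    (hf2 : ∀ m n t : ℤ,
      f (n, t) * f (m, n + t) - f (m, t) * f (n, m + t)
        = (if m + n = 0 then (1 : ℂ) else 0) * n * cI) :
    cI = 0 ∧
    ((∀ m n : ℤ, f (m, n) = f (0, 0)) ∨
     (∀ m n : ℤ, f (m, n) = ((a + n) / (a + m + n)) * f (0, 0))) := by
  obtain ⟨l, u, hf⟩ := exists_eq_add_mul_div_of_commutator ha hf1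
  have hbracket := mul_sub_mul_eq_of_eq_add_mul_div ha hf
  have hlu : l * u = 0 := by
    have h := (hf2 1 2 0).symm.trans (hbracket 1 2 0)
    have h1 := ne_zero_of_eq_add_intCast ha 1 (z := a + 1) (by simp)
    have h2 := ne_zero_of_eq_add_intCast ha 2 (z := a + 2) (by simp)
    have h3 := ne_zero_of_eq_add_intCast ha 3 (z := a + 1 + 2) (by push_cast; ring)
    norm_num at h
    rw [eq_comm, div_eq_zero_iff, or_iff_left (mul_ne_zero (mul_ne_zero h1 h2) h3)] at h
    simpa using h
  have hcI : cI = 0 := by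
    simpa [hlu] using (hf2 1 (-1) 0).symm.trans (hbracket 1 (-1) 0)
  have hf00 : f (0, 0) = l + u := by
    have ha0 : a ≠ 0 := ne_zero_of_eq_add_intCast ha 0 (by simp)
    simp [hf, ha0]
  refine ⟨hcI, ?_⟩
  rcases mul_eq_zero.mp hlu with rfl | rfl
  · right
    intro m n
    rw [hf, hf00]; ring
  · left
    intro m n
    rw [hf, hf00]; ring
end

section
/- Let a, b ∈ ℂ with a not an integer and a = b·p for some nonzero integer p. Suppose f : ℤ × ℤ → ℂ satisfies, for all m, n, t ∈ ℤ, f(m,t)·(a + t + m + b·n) − f(m, n+t)·(a + t + b·n) = m·f(n+m, t). Then f(m,t) = f(0,0) for all m, t ∈ ℤ. -/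
/-!
Subtracting the constant `c = f (0, 0)` keeps the relation, and the relation with `m = 0` shows
that `f (0, ·)` is constant, so it suffices to show that a solution `g` with `g (0, ·) = 0`
vanishes. Taking `n = -m` gives a first-order recurrence in `t` for each `g (m, ·)`; for `m = p`
it says that `h t = g (p, t) * (t + p)` is `p`-periodic. The recurrence for `m = 2p`, combined
with the relation at `m = n = p` (which expresses `g (2p, ·)` through `g (p, ·)`), forces
`h t * a * (a - p) * (2t + p) = 0`, whence `h = 0` since `a ∉ ℤ`. A few more instances of the
relation give `g (p, ·) = 0`, and then the relation with `m = p` gives `g = 0`.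
-/

/-- The relation `[L(n), I(m)] = m I(n + m)` evaluated on `v_t`, for the module with
`L(n) v_t = (a + t + b n) v_{t+n}` and `I(m) v_t = f (m, t) v_{m+t}`. -/
def BracketCompatible (a b : ℂ) (f : ℤ × ℤ → ℂ) : Prop :=
  ∀ m n t : ℤ, f (m, t) * (a + t + m + b * n) - f (m, n + t) * (a + t + b * n) = m * f (n + m, t)

namespace BracketCompatible

variable {a b : ℂ} {p : ℤ} {f g : ℤ × ℤ → ℂ}

theorem sub_const (hf : BracketCompatible a b f) (c : ℂ) :
    BracketCompatible a b (fun x => f x - c) := by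
  intro m n t
  linear_combination hf m n t

theorem apply_zero_eq_of_ne (hf : BracketCompatible a b f) {s t : ℤ}
    (hst : a + t + b * (s - t) ≠ 0) : f (0, s) = f (0, t) := by
  have h := hf 0 (s - t) t
  simp only [sub_add_cancel, add_zero, Int.cast_zero, zero_mul, Int.cast_sub] at h
  have h' : (f (0, t) - f (0, s)) * (a + t + b * (s - t)) = 0 := by linear_combination h
  exact (sub_eq_zero.mp ((mul_eq_zero.mp h').resolve_right hst)).symm

theorem apply_zero_eq (hf : BracketCompatible a b f) (hab : a = b * p) (hp : p ≠ 0)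
    (hb₀ : b ≠ 0) (hb₁ : b ≠ 1) (t : ℤ) : f (0, t) = f (0, 0) := by
  have hpC : (p : ℂ) ≠ 0 := Int.cast_ne_zero.mpr hp
  have hp₀ : f (0, p) = f (0, 0) := hf.apply_zero_eq_of_ne <| by
    rw [Int.cast_zero, show a + 0 + b * (p - 0) = b * (p + p) by rw [hab]; ring]
    exact mul_ne_zero hb₀ (by simpa [← two_mul] using hpC)
  by_cases ht : (t : ℂ) = -p
  · -- here `a + b t = 0`, so pass through `f (0, p)`
    have htp : f (0, t) = f (0, p) := hf.apply_zero_eq_of_ne <| by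
      rw [show a + p + b * (t - p) = p * (1 - b) by rw [ht, hab]; ring]
      exact mul_ne_zero hpC (sub_ne_zero.mpr hb₁.symm)
    rw [htp, hp₀]
  · refine hf.apply_zero_eq_of_ne ?_
    rw [Int.cast_zero, show a + 0 + b * (t - 0) = b * (t + p) by rw [hab]; ring]
    exact mul_ne_zero hb₀ (by rwa [Ne, add_eq_zero_iff_eq_neg])

theorem apply_mul_eq_apply_sub_mul (hg : BracketCompatible a b g) (hg₀ : ∀ t, g (0, t) = 0)
    (m t : ℤ) : g (m, t) * (a + t + m - b * m) = g (m, t - m) * (a + t - b * m) := by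
  have h := hg m (-m) t
  rw [neg_add_cancel, hg₀, neg_add_eq_sub] at h
  push_cast at h
  linear_combination h

theorem periodic_apply_mul (hg : BracketCompatible a b g) (hg₀ : ∀ t, g (0, t) = 0)
    (hab : a = b * p) : Function.Periodic (fun t : ℤ => g (p, t) * (t + p)) p := by
  intro t
  have h := hg.apply_mul_eq_apply_sub_mul hg₀ p (t + p)
  rw [add_sub_cancel_right] at h
  subst hab
  push_cast at h ⊢
  linear_combination h

theorem apply_two_mul_mul_eq (hg : BracketCompatible a b g) (hg₀ : ∀ t, g (0, t) = 0)
    (hab : a = b * p) (t : ℤ) :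
    g (2 * p, t) * (t + 2 * p - a) = g (2 * p, t - 2 * p) * (t - a) := by
  have h := hg.apply_mul_eq_apply_sub_mul hg₀ (2 * p) t
  subst hab
  push_cast at h
  linear_combination h

theorem mul_apply_two_mul_eq (hg : BracketCompatible a b g) (hab : a = b * p) (t : ℤ) :
    p * g (2 * p, t) = g (p, t) * (t + p + 2 * a) - g (p, t + p) * (t + 2 * a) := by
  have h := hg p p t
  rw [add_comm p t, ← two_mul] at h
  subst hab
  linear_combination -h

theorem apply_mul_mul_eq_zero (hg : BracketCompatible a b g) (hg₀ : ∀ t, g (0, t) = 0)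
    (hab : a = b * p) (t : ℤ) :
    g (p, t) * (t + p) * (a * (a - p) * p ^ 2 * (2 * t + p)) = 0 := by
  have hper := hg.periodic_apply_mul hg₀ hab
  have d₁ : g (p, t) * (t + p) = g (p, t - p) * t := by
    simpa using hper (t - p)
  have d₂ : g (p, t + p) * (t + 2 * p) = g (p, t) * (t + p) := by
    have := hper t
    push_cast at this
    linear_combination this
  have d₃ : g (p, t - p) * t = g (p, t - 2 * p) * (t - p) := by
    have := hper (t - 2 * p)
    rw [show t - 2 * p + p = t - p by ring] at this
    push_cast at this
    linear_combination this
  have e₂ := hg.apply_two_mul_mul_eq hg₀ hab t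
  have e₃ := hg.mul_apply_two_mul_eq hab t
  have e₄ := hg.mul_apply_two_mul_eq hab (t - 2 * p)
  rw [show t - 2 * p + p = t - p by ring] at e₄
  push_cast at e₂ e₄
  -- `p` times `e₂`, with `g (2p, ·)` eliminated by `e₃`, `e₄` and the denominators `t (t - p)`,
  -- `(t + p) (t + 2p)` cleared, so that `d₁`, `d₂`, `d₃` reduce every `g (p, ·)` term to `h t`
  linear_combination (1 / 4 : ℂ) * (
      (-2 * p * (t + p) * (t + 2 * p) * (t - a) * (t - p + a)) * d₁
      + (t * (t - p) * (t + p) * (t + 2 * p - a) * (t + 2 * a)) * d₂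
      + (-t * (t + p) * (t + 2 * p) * (t - a) * (t - p + 2 * a)) * d₃
      + (p * t * (t - p) * (t + p) * (t + 2 * p)) * e₂
      + (-t * (t - p) * (t + p) * (t + 2 * p) * (t + 2 * p - a)) * e₃
      + (t * (t - p) * (t + p) * (t + 2 * p) * (t - a)) * e₄)

theorem apply_mul_eq_zero (hg : BracketCompatible a b g) (hg₀ : ∀ t, g (0, t) = 0)
    (hab : a = b * p) (hp : p ≠ 0) (ha₀ : a ≠ 0) (hap : a ≠ p) (t : ℤ) :
    g (p, t) * (t + p) = 0 := by
  have off_center : ∀ t : ℤ, 2 * t + p ≠ 0 → g (p, t) * (t + p) = 0 := fun t ht ↦ by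
    refine (mul_eq_zero.mp (hg.apply_mul_mul_eq_zero hg₀ hab t)).resolve_right ?_
    have ht' : (2 * t + p : ℂ) ≠ 0 := by exact_mod_cast ht
    exact mul_ne_zero (mul_ne_zero (mul_ne_zero ha₀ (sub_ne_zero.mpr hap))
      (pow_ne_zero 2 (Int.cast_ne_zero.mpr hp))) ht'
  by_cases ht : 2 * t + p = 0
  · exact (hg.periodic_apply_mul hg₀ hab t).symm.trans (off_center (t + p) (by omega))
  · exact off_center t ht

theorem apply_eq_zero (hg : BracketCompatible a b g) (hg₀ : ∀ t, g (0, t) = 0)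
    (hab : a = b * p) (hp : p ≠ 0) (ha₀ : a ≠ 0) (hap : a ≠ p) (t : ℤ) : g (p, t) = 0 := by
  have off_neg : ∀ t : ℤ, t ≠ -p → g (p, t) = 0 := fun t ht ↦ by
    refine (mul_eq_zero.mp (hg.apply_mul_eq_zero hg₀ hab hp ha₀ hap t)).resolve_right ?_
    exact_mod_cast (by omega : t + p ≠ 0)
  by_cases ht : t = -p
  · subst ht
    have hpC : (p : ℂ) ≠ 0 := Int.cast_ne_zero.mpr hp
    have h₁ : g (2 * p, 0) = 0 := by
      have := hg.mul_apply_two_mul_eq hab 0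
      rw [zero_add, off_neg 0 (by omega), off_neg p (by omega)] at this
      simpa [hpC] using this
    have h₂ : g (2 * p, -(2 * p)) = 0 := by
      have := hg.apply_two_mul_mul_eq hg₀ hab 0
      rw [h₁, zero_sub] at this
      simpa [ha₀] using this
    have := hg.mul_apply_two_mul_eq hab (-(2 * p))
    rw [h₂, show -(2 * p) + p = -p by ring, off_neg (-(2 * p)) (by omega)] at this
    have h₃ : g (p, -p) * (2 * (a - p)) = 0 := by
      push_cast at this
      linear_combination this
    simpa [sub_eq_zero, hap] using h₃
  · exact off_neg t ht

theorem eq_zero (hg : BracketCompatible a b g) (hg₀ : ∀ t, g (0, t) = 0)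
    (hab : a = b * p) (hp : p ≠ 0) (ha₀ : a ≠ 0) (hap : a ≠ p) (m t : ℤ) : g (m, t) = 0 := by
  have h := hg p (m - p) t
  simp only [hg.apply_eq_zero hg₀ hab hp ha₀ hap, zero_mul, sub_zero, sub_add_cancel] at h
  simpa [hp] using h.symm

end BracketCompatible

/-- Case I.2 of Theorem 3.5: `a ∉ ℤ` but `a = b p` for some nonzero integer
`p`; then `f` is constant. -/
theorem stmt_4 (a b : ℂ) (ha : ∀ n : ℤ, a ≠ (n : ℂ))
    (p : ℤ) (hp : p ≠ 0) (hab : a = b * p)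
    (f : ℤ × ℤ → ℂ)
    (hf : ∀ m n t : ℤ,
      f (m, t) * (a + t + m + b * n) - f (m, n + t) * (a + t + b * n)
        = m * f (n + m, t)) :
    ∀ m t : ℤ, f (m, t) = f (0, 0) := by
  have hf : BracketCompatible a b f := hf
  have ha₀ : a ≠ 0 := by simpa using ha 0
  have hap : a ≠ p := ha p
  have hb₀ : b ≠ 0 := by rintro rfl; simp [hab] at ha₀
  have hb₁ : b ≠ 1 := by rintro rfl; simp [hab] at hap
  have hg₀ : ∀ t, f (0, t) - f (0, 0) = 0 :=
    fun t ↦ sub_eq_zero.mpr (hf.apply_zero_eq hab hp hb₀ hb₁ t)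
  intro m t
  exact sub_eq_zero.mp ((hf.sub_const (f (0, 0))).eq_zero hg₀ hab hp ha₀ hap m t)
end

section
/- Suppose f : ℤ × ℤ → ℂ satisfies, for all m, n, t ∈ ℤ, f(m,t)·(t + m + n) − f(m, n+t)·(t + n) = m·f(n+m, t). Then there exists d ∈ ℂ such that f(m, n) = f(0,0) for all m ∈ ℤ and all n ≠ 0, and f(m, 0) = d·m + f(0,0) for all m ∈ ℤ. -/
/-- Structural step of Case I.3.2 (`b = 1`, `a = 0`) of Theorem 3.5. -/
theorem stmt_5 (f : ℤ × ℤ → ℂ)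
    (hf : ∀ m n t : ℤ,
      f (m, t) * (t + m + n) - f (m, n + t) * (t + n) = m * f (n + m, t)) :
    ∃ d : ℂ,
      (∀ m n : ℤ, n ≠ 0 → f (m, n) = f (0, 0)) ∧
      (∀ m : ℤ, f (m, 0) = d * m + f (0, 0)) := by
  set c : ℂ := f (0, 0) with hc
  set d : ℂ := f (1, 0) - f (0, 0) with hd
  -- (D): n * f (m, n) = (m+n) * f (m,0) - m * f (m+n, 0)
  have hD : ∀ m n : ℤ, (n : ℂ) * f (m, n) = (m + n) * f (m, 0) - m * f (m + n, 0) := by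
    intro m n
    have h := hf m n 0
    simp only [zero_add, add_zero] at h
    push_cast at h
    have harg : n + m = m + n := by ring
    rw [harg] at h
    linear_combination -h
  -- (C): m * f (m, t) = m * f (m - t, t)
  have hC : ∀ m t : ℤ, (m : ℂ) * f (m, t) = m * f (m - t, t) := by
    intro m t
    have h := hf m (-t) t
    have h1 : -t + t = 0 := by ring
    have h2 : -t + m = m - t := by ring
    rw [h1, h2] at h
    push_cast at h ⊢
    linear_combination h
  -- (H): for m ≠ 0, f (m+t, 0) + f (m-t, 0) = 2 * f (m, 0)
  have hH : ∀ m t : ℤ, m ≠ 0 → f (m + t, 0) + f (m - t, 0) = 2 * f (m, 0) := by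
    intro m t hm
    have hm' : (m : ℂ) ≠ 0 := Int.cast_ne_zero.mpr hm
    have e1 := hD m t
    have e2 := hD (m - t) t
    have harg : m - t + t = m := by ring
    rw [harg] at e2
    have e3 := hC m t
    have key : (m : ℂ) * ((m : ℂ) * (f (m + t, 0) + f (m - t, 0))) =
        (m : ℂ) * ((m : ℂ) * (2 * f (m, 0))) := by
      push_cast at e1 e2 ⊢
      linear_combination (m : ℂ) * e1 - (m : ℂ) * e2 - (t : ℂ) * e3
    exact mul_left_cancel₀ hm' (mul_left_cancel₀ hm' key)
  -- positive part: g n = d*n + c for naturals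
  have pos : ∀ n : ℕ, f ((n : ℤ), 0) = d * n + c ∧ f ((n : ℤ) + 1, 0) = d * (n + 1) + c := by
    intro n
    induction n with
    | zero =>
      refine ⟨by simpa using hc.symm, ?_⟩
      simp only [Nat.cast_zero, zero_add]
      rw [hd, hc]; ring
    | succ k ih =>
      obtain ⟨ih1, ih2⟩ := ih
      have h := hH ((k : ℤ) + 1) 1 (by omega)
      have hb : (k : ℤ) + 1 - 1 = (k : ℤ) := by ring
      rw [hb] at h
      constructor
      · push_cast
        exact ih2
      · have harg : ((k : ℤ) + 1) + 1 = ((k + 1 : ℕ) : ℤ) + 1 := by push_cast; ring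
        rw [harg] at h
        push_cast at ih1 ih2 h ⊢
        linear_combination h - ih1 + 2 * ih2
  have posZ : ∀ j : ℤ, 0 ≤ j → f (j, 0) = d * (j : ℂ) + c := by
    intro j hj
    lift j to ℕ using hj
    have h := (pos j).1
    exact h
  -- affine: g m = d*m + c for all integers
  have affine : ∀ m : ℤ, f (m, 0) = d * m + c := by
    intro m
    rcases le_or_gt 0 m with hm | hm
    · exact posZ m hm
    · have h := hH 1 (1 - m) one_ne_zero
      have h1 : (1 : ℤ) + (1 - m) = 2 - m := by ring
      have h2 : (1 : ℤ) - (1 - m) = m := by ring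
      rw [h1, h2] at h
      have g1 : f ((1 : ℤ), 0) = d * 1 + c := by
        have h0 := (pos 0).2
        push_cast at h0
        simpa using h0
      have g2m := posZ (2 - m) (by omega)
      push_cast at g2m h ⊢
      linear_combination h - g2m + 2 * g1
  refine ⟨d, ?_, ?_⟩
  · intro m n hn
    have hn' : (n : ℂ) ≠ 0 := Int.cast_ne_zero.mpr hn
    have h := hD m n
    rw [affine m, affine (m + n)] at h
    push_cast at h
    have : (n : ℂ) * f (m, n) = (n : ℂ) * c := by linear_combination h
    exact mul_left_cancel₀ hn' this
  · intro m; exact affine m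
end

section
/- Suppose f : ℤ × ℤ → ℂ satisfies, for all m, n, t ∈ ℤ, both f(m,t)·(t + m + n) − f(m, n+t)·(t + n) = m·f(n+m, t) and f(m, n+t)·f(n,t) = f(n, m+t)·f(m,t). Then either f(m,n) = f(0,0) for all m, n ∈ ℤ, or f(0,0) = 0 and there exists d ∈ ℂ with f(m,0) = d·m for all m and f(m,n) = 0 whenever n ≠ 0. -/
/-!
Putting `n = -t` in the first equation gives `f (m, t) = f (m - t, t)` for `m ≠ 0`, and putting
`t = 0` expresses `n f (m, n)` through the row `g := f (·, 0)`. Comparing the two shows that `g`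
satisfies the midpoint equation `g (m + n) + g (m - n) = 2 g m` about every `m ≠ 0`, which forces
`g n = c + d n` with `c = f (0, 0)`. Substituting back, `f (m, n) = c` for every `n ≠ 0`, and the
second equation at `(m, n, t) = (1, -1, 1)` reads `c (c + d) = c²`, i.e. `c d = 0`.
-/

section AffineOnInt

variable {G : Type*} [AddCommGroup G] {g : ℤ → G}

theorem eq_add_zsmul_of_forall_sub_eq {a : G} (h : ∀ n, g (n + 1) - g n = a) (n : ℤ) :
    g n = g 0 + n • a := by
  induction n using Int.induction_on with
  | zero => simp
  | succ i ih => linear_combination (norm := module) h i + ih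
  | pred i ih =>
    have hstep := h (-i - 1)
    rw [sub_add_cancel] at hstep
    linear_combination (norm := module) ih - hstep

theorem sub_eq_of_midpoint_of_ne_zero
    (h : ∀ m ≠ 0, ∀ n, g (m + n) + g (m - n) = 2 • g m) (n : ℤ) :
    g (n + 1) - g n = g 1 - g 0 := by
  have hstep (m : ℤ) (hm : m ≠ 0) : g (m + 1) - g m = g (m - 1 + 1) - g (m - 1) := by
    rw [sub_add_cancel]
    linear_combination (norm := module) h m hm 1
  have hnonneg (k : ℕ) : g (k + 1) - g k = g 1 - g 0 := by
    induction k with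
    | zero => simp
    | succ k ih =>
      rw [hstep _ (by omega)]
      push_cast
      simpa using ih
  -- the midpoint equation about `1` with step `2` links the two half-lines
  have hbridge : g 0 - g (-1) = g 1 - g 0 := by
    have h13 := h 1 one_ne_zero 2
    have h2 := hnonneg 2
    have h1 := hnonneg 1
    norm_num at h1 h2 h13
    linear_combination (norm := module) h2 + h1 - h13
  have hneg (k : ℕ) : g (-k - 1 + 1) - g (-k - 1) = g 1 - g 0 := by
    induction k with
    | zero => simpa using hbridge
    | succ k ih =>
      rw [← ih, ← hstep _ (by omega)]
      push_cast
      ring_nf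
  obtain ⟨k, rfl | rfl⟩ := Int.eq_nat_or_neg n
  · exact hnonneg k
  · rcases k with _ | k
    · simp
    · convert hneg k using 2 <;> push_cast <;> ring_nf

theorem eq_add_zsmul_of_midpoint_of_ne_zero
    (h : ∀ m ≠ 0, ∀ n, g (m + n) + g (m - n) = 2 • g m) (n : ℤ) :
    g n = g 0 + n • (g 1 - g 0) :=
  eq_add_zsmul_of_forall_sub_eq (sub_eq_of_midpoint_of_ne_zero h) n

end AffineOnInt

/-- `f` encodes the action `I(m) v_t = f (m, t) v_{m+t}`; this is the relation
`[L(n), I(m)] = m I(n + m)` evaluated on `v_t`, where `L(n) v_t = (t + n) v_{t+n}`. -/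
def IsVirasoroCompatible (f : ℤ × ℤ → ℂ) : Prop :=
  ∀ m n t : ℤ, f (m, t) * (t + m + n) - f (m, n + t) * (t + n) = m * f (n + m, t)

namespace IsVirasoroCompatible

variable {f : ℤ × ℤ → ℂ}

theorem apply_eq_apply_sub (hf : IsVirasoroCompatible f) {m : ℤ} (hm : m ≠ 0) (t : ℤ) :
    f (m, t) = f (m - t, t) := by
  have key := hf m (-t) t
  rw [neg_add_cancel, ← sub_eq_neg_add] at key
  push_cast at key
  exact mul_left_cancel₀ (Int.cast_ne_zero.mpr hm) (by linear_combination key)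

theorem apply_mul_snd_eq (hf : IsVirasoroCompatible f) (m n : ℤ) :
    f (m, n) * n = f (m, 0) * (m + n) - m * f (m + n, 0) := by
  have key := hf m n 0
  rw [add_zero, add_comm n m] at key
  push_cast at key
  linear_combination -key

theorem row_zero_midpoint (hf : IsVirasoroCompatible f) {m : ℤ} (hm : m ≠ 0) (n : ℤ) :
    f (m + n, 0) + f (m - n, 0) = 2 • f (m, 0) := by
  have hshift := congrArg (· * (n : ℂ)) (hf.apply_eq_apply_sub hm n)
  simp only [hf.apply_mul_snd_eq, sub_add_cancel] at hshift
  push_cast at hshift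
  rw [two_nsmul]
  exact mul_left_cancel₀ (Int.cast_ne_zero.mpr hm) (by linear_combination -hshift)

theorem row_zero_eq (hf : IsVirasoroCompatible f) (m : ℤ) :
    f (m, 0) = f (0, 0) + (f (1, 0) - f (0, 0)) * m := by
  rw [eq_add_zsmul_of_midpoint_of_ne_zero (g := fun m => f (m, 0))
    (fun _ hm => hf.row_zero_midpoint hm) m, zsmul_eq_mul, mul_comm]

theorem apply_of_snd_ne_zero (hf : IsVirasoroCompatible f) (m : ℤ) {n : ℤ} (hn : n ≠ 0) :
    f (m, n) = f (0, 0) := by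
  have key := hf.apply_mul_snd_eq m n
  rw [hf.row_zero_eq m, hf.row_zero_eq (m + n)] at key
  push_cast at key
  exact mul_right_cancel₀ (Int.cast_ne_zero.mpr hn) (by linear_combination key)

end IsVirasoroCompatible

/-- Case I.3.2 (`b = 1`, `a = 0`) of Theorem 3.5: either `f` is constant, or
`f(0,0) = 0`, `f(m,0) = d m` for some `d`, and `f(m,n) = 0` for `n ≠ 0`. -/
theorem stmt_6 (f : ℤ × ℤ → ℂ)
    (hf1 : ∀ m n t : ℤ,
      f (m, t) * (t + m + n) - f (m, n + t) * (t + n) = m * f (n + m, t))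
    (hf2 : ∀ m n t : ℤ, f (m, n + t) * f (n, t) = f (n, m + t) * f (m, t)) :
    (∀ m n : ℤ, f (m, n) = f (0, 0)) ∨
    (f (0, 0) = 0 ∧ ∃ d : ℂ,
      (∀ m : ℤ, f (m, 0) = d * m) ∧
      (∀ m n : ℤ, n ≠ 0 → f (m, n) = 0)) := by
  have hf : IsVirasoroCompatible f := hf1
  set c := f (0, 0)
  set d := f (1, 0) - c
  have hrow (m : ℤ) : f (m, 0) = c + d * m := hf.row_zero_eq m
  have hoff (m : ℤ) {n : ℤ} (hn : n ≠ 0) : f (m, n) = c := hf.apply_of_snd_ne_zero m hn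
  have hdc : d * c = 0 := by
    have key := hf2 1 (-1) 1
    rw [neg_add_cancel, hoff (-1) one_ne_zero, hoff (-1) (n := 1 + 1) two_ne_zero,
      hoff 1 one_ne_zero] at key
    linear_combination key
  rcases mul_eq_zero.mp hdc with hd | hc
  · left
    intro m n
    rcases eq_or_ne n 0 with rfl | hn
    · simp [hrow, hd]
    · exact hoff m hn
  · right
    refine ⟨hc, d, fun m => by simp [hrow, hc], fun m n hn => by rw [hoff m hn, hc]⟩
end

section
/- Suppose f : ℤ × ℤ → ℂ satisfies, for all m, n, t ∈ ℤ, (t + m)·f(m,t) − t·f(m, n+t) = m·f(m+n, t). Then there exists d ∈ ℂ such that f(m, n) = f(0,0) whenever m + n ≠ 0, and f(m, −m) = d·m + f(0,0) for all m ∈ ℤ. -/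
/-!
Put `c = f (0, 0)` and `g m = f (m, -m)`. Choosing `n = -m - t` in the relation gives
`(t + m) f (m, t) = t g m + m g (-t)`, so `f` is determined off the antidiagonal by `g`.
Combining this identity at `t = -b` and `t = -(a + b)` with the relation at `n = -a`, `t = -b`
shows that `g - c` is additive, hence `g m = (g 1 - c) m + c`; substituting back gives
`f (m, t) = c` whenever `t + m ≠ 0`.
-/

/-- `I(m) v_t = f (m, t) v_{m+t}` is compatible with `[L(n), I(m)] = m I(n+m)`
for `L(n) v_t = t v_{t+n}`. -/
def SatisfiesLIRelation {K : Type*} [CommRing K] (f : ℤ × ℤ → K) : Prop :=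
  ∀ m n t : ℤ, (t + m) * f (m, t) - t * f (m, n + t) = m * f (m + n, t)

theorem eq_affine_of_map_add_eq_add_sub {K : Type*} [Ring K] (g : ℤ → K) (c : K)
    (hg : ∀ a b, g (a + b) = g a + g b - c) (m : ℤ) :
    g m = (g 1 - c) * m + c := by
  let φ : ℤ →+ K := AddMonoidHom.mk' (fun m => g m - c) fun a b => by
    simp only [hg]; abel
  have hφ : g m - c = m • (g 1 - c) := by simpa [φ] using map_zsmul φ m 1
  rw [zsmul_eq_mul, Int.cast_comm] at hφ
  exact eq_add_of_sub_eq hφ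

namespace SatisfiesLIRelation

variable {K : Type*} [CommRing K] {f : ℤ × ℤ → K}

theorem add_mul_apply (hf : SatisfiesLIRelation f) (m t : ℤ) :
    ((t : K) + m) * f (m, t) = t * f (m, -m) + m * f (-t, t) := by
  have h := hf m (-m - t) t
  rw [show -m - t + t = -m by ring, show m + (-m - t) = -t by ring] at h
  linear_combination h

variable [IsDomain K] [CharZero K]

theorem apply_zero_left (hf : SatisfiesLIRelation f) (t : ℤ) : f (0, t) = f (0, 0) := by
  rcases eq_or_ne t 0 with rfl | ht
  · rfl
  have h := hf 0 (-t) t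
  simp only [neg_add_cancel, Int.cast_zero, add_zero, zero_mul, zero_add] at h
  exact mul_left_cancel₀ (Int.cast_ne_zero.mpr ht) (sub_eq_zero.mp h)

theorem diag_add (hf : SatisfiesLIRelation f) (a b : ℤ) :
    f (a + b, -(a + b)) = f (a, -a) + f (b, -b) - f (0, 0) := by
  rcases eq_or_ne a 0 with rfl | ha
  · simp
  have E1 := hf.add_mul_apply a (-b)
  have E2 := hf a (-a) (-b)
  have E3 := hf.add_mul_apply a (-(a + b))
  rw [add_neg_cancel, hf.apply_zero_left, ← neg_add] at E2
  rw [neg_neg] at E1 E3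
  push_cast at E1 E2 E3
  refine mul_left_cancel₀ (Int.cast_ne_zero.mpr ha : (a : K) ≠ 0) ?_
  linear_combination E1 - E2 - E3

theorem diag_eq (hf : SatisfiesLIRelation f) (m : ℤ) :
    f (m, -m) = (f (1, -1) - f (0, 0)) * m + f (0, 0) :=
  eq_affine_of_map_add_eq_add_sub (fun m => f (m, -m)) _ hf.diag_add m

theorem apply_of_add_ne_zero (hf : SatisfiesLIRelation f) {m n : ℤ} (hmn : m + n ≠ 0) :
    f (m, n) = f (0, 0) := by
  have h := hf.add_mul_apply m n
  have hdiag := hf.diag_eq (-n)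
  rw [neg_neg] at hdiag
  rw [hf.diag_eq m, hdiag] at h
  have hne : (n : K) + m ≠ 0 := by exact_mod_cast add_comm m n ▸ hmn
  refine mul_left_cancel₀ hne ?_
  push_cast at h
  linear_combination h

end SatisfiesLIRelation

/-- Structural step of Case I.3.3 (`b = 0`, `a = 0`) of Theorem 3.5. -/
theorem stmt_7 (f : ℤ × ℤ → ℂ)
    (hf : ∀ m n t : ℤ,
      (t + m) * f (m, t) - t * f (m, n + t) = m * f (m + n, t)) :
    ∃ d : ℂ,
      (∀ m n : ℤ, m + n ≠ 0 → f (m, n) = f (0, 0)) ∧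
      (∀ m : ℤ, f (m, -m) = d * m + f (0, 0)) := by
  have hf : SatisfiesLIRelation f := hf
  exact ⟨f (1, -1) - f (0, 0), fun _ _ => hf.apply_of_add_ne_zero, hf.diag_eq⟩
end

section
/- Let a ∈ ℂ and define g : ℤ × ℤ → ℂ by g(n, t) = n + t for t ≠ 0 and g(n, 0) = n·(n + a). Suppose f : ℤ × ℤ → ℂ satisfies, for all m, n, t ∈ ℤ, both f(m,t)·g(n, m+t) − g(n,t)·f(m, n+t) = m·f(n+m, t) and f(m, n+t)·f(n,t) = f(n, m+t)·f(m,t). Then there exists d ∈ ℂ such that f(m, 0) = d·m for all m ∈ ℤ and f(m, t) = 0 for all m ∈ ℤ and all t ≠ 0. -/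
/-- Case II of Theorem 3.5: the Virasoro part acts as the module `𝒜(a)`. -/
theorem stmt_9 (a : ℂ) (g : ℤ → ℤ → ℂ)
    (hg : ∀ n t : ℤ, g n t = if t = 0 then n * (n + a) else (n : ℂ) + t)
    (f : ℤ × ℤ → ℂ)
    (hf1 : ∀ m n t : ℤ,
      f (m, t) * g n (m + t) - g n t * f (m, n + t) = m * f (n + m, t))
    (hf2 : ∀ m n t : ℤ, f (m, n + t) * f (n, t) = f (n, m + t) * f (m, t)) :
    ∃ d : ℂ,
      (∀ m : ℤ, f (m, 0) = d * m) ∧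
      (∀ m t : ℤ, t ≠ 0 → f (m, t) = 0) := by
  have hg0 : ∀ n : ℤ, g n 0 = (n : ℂ) * (n + a) := by intro n; rw [hg]; simp
  have hgn : ∀ n t : ℤ, t ≠ 0 → g n t = (n : ℂ) + t := by
    intro n t ht; rw [hg]; simp [ht]
  -- (i) f(m,-m) is essentially constant
  have key1 : ∀ m t : ℤ, t ≠ 0 → m + t ≠ 0 → (m : ℂ) * f (m, -m) = m * f (-t, t) := by
    intro m t ht hmt
    have h := hf1 m (-(m + t)) t
    rw [show -(m + t) + t = -m by ring, show -(m + t) + m = -t by ring,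
        hgn (-(m+t)) (m+t) hmt, hgn (-(m+t)) t ht] at h
    push_cast at h
    linear_combination h
  have key2 : ∀ m : ℤ, m ≠ 0 → (m : ℂ) * ((a - m) * f (m, -m)) = m * f (0, 0) := by
    intro m hm
    have h := hf1 m (-m) 0
    rw [show m + (0:ℤ) = m by ring, show -m + (0:ℤ) = -m by ring,
        show -m + m = (0:ℤ) by ring, hgn (-m) m hm, hg0] at h
    push_cast at h
    linear_combination h
  have hd1 : ∀ m t : ℤ, m ≠ 0 → t ≠ 0 → m + t ≠ 0 → f (m, -m) = f (-t, t) := by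
    intro m t hm ht hmt
    exact mul_left_cancel₀ (Int.cast_ne_zero.mpr hm) (key1 m t ht hmt)
  have h1 := hd1 1 5 (by norm_num) (by norm_num) (by norm_num)
  have h2 := hd1 2 5 (by norm_num) (by norm_num) (by norm_num)
  have h3 := key2 1 (by norm_num)
  have h4 := key2 2 (by norm_num)
  push_cast at h3 h4
  have hK : f (-5, 5) = 0 := by
    linear_combination (1 - a) * h1 + (a - 2) * h2 + h3 - h4 / 2
  have hf00 : f (0, 0) = 0 := by
    linear_combination (a - 1) * h1 + (a - 1) * hK - h3
  have Zdiag : ∀ m : ℤ, f (m, -m) = 0 := by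
    intro m
    by_cases hm : m = 0
    · subst hm; simpa using hf00
    by_cases hm5 : m = -5
    · subst hm5; norm_num; exact hK
    · rw [hd1 m 5 hm (by norm_num) (by omega)]; exact hK
  -- (iv) f(0,t) = 0 for t ≠ 0
  have e12 : ∀ t u : ℤ, t ≠ 0 → u ≠ 0 → f (0, t) = f (0, u) := by
    intro t u ht hu
    have h := hf1 0 (u - t) t
    rw [show (0:ℤ) + t = t by ring, show u - t + t = u by ring,
        hgn (u-t) t ht] at h
    push_cast at h
    have hu' : (u : ℂ) ≠ 0 := Int.cast_ne_zero.mpr hu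
    apply mul_left_cancel₀ hu'
    linear_combination h
  have hf01 : f (0, 1) = 0 := by
    have ha1 := hf1 0 1 0
    have ha2 := hf1 0 2 0
    rw [show (0:ℤ) + (0:ℤ) = 0 by ring, show (1:ℤ) + (0:ℤ) = 1 by ring,
        hg0, hf00] at ha1
    rw [show (0:ℤ) + (0:ℤ) = 0 by ring, show (2:ℤ) + (0:ℤ) = 2 by ring,
        hg0, hf00] at ha2
    have hu := e12 2 1 (by norm_num) (by norm_num)
    push_cast at ha1 ha2
    rw [hu] at ha2
    linear_combination ha1 - ha2 / 2
  have Z0 : ∀ t : ℤ, t ≠ 0 → f (0, t) = 0 := fun t ht =>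
    (e12 t 1 ht one_ne_zero).trans hf01
  -- (v) descent in t
  have Bp : ∀ m t : ℤ, t ≠ 0 → m + t ≠ 0 →
      (t : ℂ) * f (m, t) = ((t : ℂ) - m) * f (m, t - m) := by
    intro m t ht hmt
    have h := hf1 m (-m) t
    rw [show -m + t = t - m by ring, show -m + m = (0:ℤ) by ring,
        hgn (-m) (m+t) hmt, hgn (-m) t ht, Z0 t ht] at h
    push_cast at h
    linear_combination h
  -- (vi) descent in m
  have Ee : ∀ m s : ℤ, m ≠ 0 → (s : ℂ) * f (m, s) = -(m : ℂ) * f (2*m + s, -m) := by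
    intro m s hm
    have h := hf1 m (s + m) (-m)
    rw [show m + -m = (0:ℤ) by ring, show s + m + -m = s by ring,
        show s + m + m = 2*m + s by ring,
        hgn (s+m) (-m) (neg_ne_zero.mpr hm), hg0, Zdiag m] at h
    push_cast at h
    linear_combination -h
  -- main vanishing lemma by Euclidean descent
  have Zmain : ∀ N : ℕ, ∀ m t : ℤ, t ≠ 0 → m.natAbs + (m + t).natAbs ≤ N →
      f (m, t) = 0 := by
    intro N
    induction N using Nat.strong_induction_on with
    | _ N ih =>
      intro m t ht hb
      by_contra hne
      have hm : m ≠ 0 := by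
        intro h; apply hne; rw [h]; exact Z0 t ht
      have hc : m + t ≠ 0 := by
        intro h
        apply hne
        have hteq : t = -m := by omega
        rw [hteq]; exact Zdiag m
      have htC : (t : ℂ) ≠ 0 := Int.cast_ne_zero.mpr ht
      rcases le_or_gt (m + t).natAbs m.natAbs with hle | hlt
      · -- reduce |m| : E-moves
        have hch : (2*m + t).natAbs < m.natAbs ∨ t.natAbs < m.natAbs := by omega
        rcases hch with h1 | h1
        · -- forward E
          have he := Ee m t hm
          have hz : f (2*m + t, -m) = 0 :=
            ih ((2*m + t).natAbs + ((2*m + t) + -m).natAbs) (by omega)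
              (2*m + t) (-m) (neg_ne_zero.mpr hm) le_rfl
          rw [hz, mul_zero] at he
          exact hne ((mul_eq_zero.mp he).resolve_left htC)
        · -- backward E
          have he := Ee (-t) (m + 2*t) (neg_ne_zero.mpr ht)
          rw [show 2 * -t + (m + 2*t) = m by ring, neg_neg] at he
          by_cases ht2 : m + 2*t = 0
          · rw [ht2] at he
            have he' : (t : ℂ) * f (m, t) = 0 := by push_cast at he; linear_combination -he
            exact hne ((mul_eq_zero.mp he').resolve_left htC)
          · have hz : f (-t, m + 2*t) = 0 :=
              ih ((-t).natAbs + (-t + (m + 2*t)).natAbs) (by omega)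
                (-t) (m + 2*t) ht2 le_rfl
            rw [hz, mul_zero] at he
            have he' : (t : ℂ) * f (m, t) = 0 := by push_cast at he; linear_combination -he
            exact hne ((mul_eq_zero.mp he').resolve_left htC)
      · -- reduce |m+t| : A-moves
        have hch : t.natAbs < (m + t).natAbs ∨ (m + t + m).natAbs < (m + t).natAbs := by
          omega
        rcases hch with h1 | h1
        · -- forward A
          have hB := Bp m t ht hc
          by_cases htm : t - m = 0
          · have : ((t : ℂ) - m) = 0 := by
              have : t = m := by omega
              rw [this]; ring
            rw [this, zero_mul] at hB
            exact hne ((mul_eq_zero.mp hB).resolve_left htC)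
          · have hz : f (m, t - m) = 0 :=
              ih (m.natAbs + (m + (t - m)).natAbs) (by omega) m (t - m) htm le_rfl
            rw [hz, mul_zero] at hB
            exact hne ((mul_eq_zero.mp hB).resolve_left htC)
        · -- backward A
          have h2 : t + m ≠ 0 := by omega
          have h3 : m + (t + m) ≠ 0 := by omega
          have hB := Bp m (t + m) h2 h3
          rw [show t + m - m = t by ring] at hB
          have hz : f (m, t + m) = 0 :=
            ih (m.natAbs + (m + (t + m)).natAbs) (by omega) m (t + m) h2 le_rfl
          rw [hz, mul_zero] at hB
          have hB' : (t : ℂ) * f (m, t) = 0 := by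
            push_cast at hB; linear_combination -hB
          exact hne ((mul_eq_zero.mp hB').resolve_left htC)
  have Znz : ∀ m t : ℤ, t ≠ 0 → f (m, t) = 0 := fun m t ht =>
    Zmain (m.natAbs + (m + t).natAbs) m t ht le_rfl
  refine ⟨f (1, 0), ?_, Znz⟩
  intro k
  by_cases hk : k = 1
  · subst hk; norm_num
  · have h := hf1 1 (k - 1) 0
    rw [show (1:ℤ) + 0 = 1 by ring, show k - 1 + 0 = k - 1 by ring,
        show k - 1 + 1 = k by ring, hgn (k-1) 1 one_ne_zero,
        Znz 1 (k - 1) (by omega)] at h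
    push_cast at h
    linear_combination -h
end

section
/- Let a ∈ ℂ and define g : ℤ × ℤ → ℂ by g(n, t) = t for t ≠ −n and g(n, −n) = −n·(n + a). Suppose f : ℤ × ℤ → ℂ satisfies, for all m, n, t ∈ ℤ, both f(m,t)·g(n, m+t) − g(n,t)·f(m, n+t) = m·f(n+m, t) and f(m, n+t)·f(n,t) = f(n, m+t)·f(m,t). Then there exists d ∈ ℂ such that f(m, −m) = d·m for all m ∈ ℤ and f(m, t) = 0 whenever m + t ≠ 0. -/
/-- Case III of Theorem 3.5: the Virasoro part acts as the module `ℬ(a)`. -/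
theorem stmt_10 (a : ℂ) (g : ℤ → ℤ → ℂ)
    (hg : ∀ n t : ℤ, g n t = if t = -n then -n * (n + a) else (t : ℂ))
    (f : ℤ × ℤ → ℂ)
    (hf1 : ∀ m n t : ℤ,
      f (m, t) * g n (m + t) - g n t * f (m, n + t) = m * f (n + m, t))
    (hf2 : ∀ m n t : ℤ, f (m, n + t) * f (n, t) = f (n, m + t) * f (m, t)) :
    ∃ d : ℂ,
      (∀ m : ℤ, f (m, -m) = d * m) ∧
      (∀ m t : ℤ, m + t ≠ 0 → f (m, t) = 0) := by
  have cz : ∀ k : ℤ, k ≠ 0 → (k : ℂ) ≠ 0 := fun k h => Int.cast_ne_zero.mpr h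
  have hgne : ∀ n t : ℤ, t ≠ -n → g n t = (t : ℂ) := by
    intro n t h; rw [hg]; simp [h]
  have hg0 : ∀ n : ℤ, g n 0 = 0 := by
    intro n; rw [hg]; split
    · next h =>
      have hn : n = 0 := by omega
      subst hn; norm_num
    · norm_num
  -- Step 1: f (m, 0) = 0
  have key0 : ∀ m k : ℤ, m ≠ 0 → k ≠ 0 → f (m, 0) = f (k, 0) := by
    intro m k hm hk
    have h := hf1 m (k - m) 0
    simp only [add_zero] at h
    rw [hg0, hgne (k - m) m (by omega)] at h
    have e1 : k - m + m = k := by ring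
    rw [e1] at h
    refine mul_left_cancel₀ (cz m hm) ?_
    linear_combination h
  have key1 : ∀ m : ℤ, m ≠ 0 → f (m, 0) * (a - m) = f (0, 0) := by
    intro m hm
    have h := hf1 m (-m) 0
    simp only [add_zero] at h
    rw [hg0] at h
    have hgm : g (-m) m = (m : ℂ) * (a - m) := by
      rw [hg, if_pos (by ring)]
      push_cast; ring
    rw [hgm] at h
    have e2 : -m + m = 0 := by ring
    rw [e2] at h
    refine mul_left_cancel₀ (cz m hm) ?_
    linear_combination h
  have hF0 : ∀ m : ℤ, f (m, 0) = 0 := by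
    have h1 := key1 1 one_ne_zero
    have h2 := key1 2 two_ne_zero
    have h12 := key0 1 2 one_ne_zero two_ne_zero
    have hf10 : f (1, 0) = 0 := by
      push_cast at h1 h2
      linear_combination h1 - h2 - (a - 2) * h12
    intro m
    by_cases hm : m = 0
    · subst hm
      push_cast at h1
      linear_combination (a - 1) * hf10 - h1
    · rw [key0 m 1 hm one_ne_zero, hf10]
  -- (A)
  have hA : ∀ m t : ℤ, m ≠ 0 → t ≠ 0 →
      ((m : ℂ) + t) * f (m, t) = m * f (m - t, t) := by
    intro m t hm ht
    have h := hf1 m (-t) t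
    have e1 : -t + t = 0 := by ring
    have e2 : -t + m = m - t := by ring
    rw [e1, e2, hF0 m, hgne (-t) (m + t) (by omega)] at h
    push_cast at h
    linear_combination h
  -- (B)
  have hB : ∀ m t : ℤ, m ≠ 0 →
      (a - m - t) * (((m : ℂ) + t) * f (m, t))
        = t * f (m, -m) + m * f (-t, t) := by
    intro m t hm
    have h := hf1 m (-(m + t)) t
    have e1 : -(m + t) + t = -m := by ring
    have e2 : -(m + t) + m = -t := by ring
    rw [e1, e2] at h
    have hgm : g (-(m + t)) (m + t) = ((m : ℂ) + t) * (a - m - t) := by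
      rw [hg, if_pos (by ring)]
      push_cast; ring
    rw [hgm, hgne (-(m + t)) t (by omega)] at h
    push_cast at h
    linear_combination h
  -- (F)
  have hFE : ∀ m t : ℤ, m ≠ 0 → t ≠ 0 → m ≠ t →
      ((m : ℂ) + t) * f (m, t)
        = f (m - t, -(m - t)) - f (m, -m) - f (-t, t) := by
    intro m t hm ht hmt
    have h1 := hB (m - t) t (by omega)
    have h2 := hB m t hm
    have h3 := hA m t hm ht
    push_cast at h1 h2 h3 ⊢
    refine mul_left_cancel₀ (cz t ht) ?_
    linear_combination h1 - h2 + (a - (m : ℂ)) * h3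
  -- (H)
  have hH : ∀ m t : ℤ, m ≠ 0 → t ≠ 0 → m ≠ t →
      ((m : ℂ) + t) * f (m - t, -(m - t)) = m * f (m, -m) + t * f (-t, t) := by
    intro m t hm ht hmt
    have g1 : (a - m - t) * (f (m - t, -(m - t)) - f (m, -m) - f (-t, t))
        = t * f (m, -m) + m * f (-t, t) := by
      rw [← hFE m t hm ht hmt]; exact hB m t hm
    have h2' := hB (-t) (-m) (by omega)
    have hfe' := hFE (-t) (-m) (by omega) (by omega) (by omega)
    simp only [neg_neg] at h2' hfe'
    have e : -t - -m = m - t := by ring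
    rw [e] at hfe'
    have g2 : (a - (-t : ℂ) - (-m : ℂ)) * (f (m - t, -(m - t)) - f (-t, t) - f (m, -m))
        = (-m : ℂ) * f (-t, t) + (-t : ℂ) * f (m, -m) := by
      push_cast at h2' hfe' ⊢
      rw [← hfe']; linear_combination h2'
    push_cast at g1 g2 ⊢
    linear_combination (1/2 : ℂ) * g2 - (1/2 : ℂ) * g1
  -- recurrences
  have hup : ∀ m : ℤ, m ≠ 0 → m ≠ -1 →
      ((m : ℂ) - 1) * f (m + 1, -(m + 1)) = m * f (m, -m) - f (1, -1) := by
    intro m hm hm1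
    have h := hH m (-1) hm (by norm_num) (by omega)
    have e : m - -1 = m + 1 := by ring
    rw [e] at h
    simp only [neg_neg] at h
    push_cast at h ⊢
    linear_combination h
  have hdown : ∀ m : ℤ, m ≠ 0 → m ≠ 1 →
      ((m : ℂ) + 1) * f (m - 1, -(m - 1)) = m * f (m, -m) + f (-1, 1) := by
    intro m hm hm1
    have h := hH m 1 hm one_ne_zero hm1
    push_cast at h ⊢
    linear_combination h
  -- value at 2 and -2
  have hD2 : 2 * f (2, -2) = 3 * f (1, -1) - f (-1, 1) := by
    have h := hH 2 1 (by norm_num) (by norm_num) (by norm_num)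
    norm_num at h
    linear_combination -h
  have hDm2 : 2 * f (-2, 2) = 3 * f (-1, 1) - f (1, -1) := by
    have h := hH (-2) (-1) (by norm_num) (by norm_num) (by norm_num)
    have e : (-2 : ℤ) - -1 = -1 := by norm_num
    rw [e] at h
    norm_num at h
    linear_combination h
  -- linearity
  have hpos : ∀ n : ℕ, 2 * f ((n : ℤ) + 2, -((n : ℤ) + 2))
      = (f (1, -1) - f (-1, 1)) * ((n : ℂ) + 2) + (f (1, -1) + f (-1, 1)) := by
    intro n
    induction n with
    | zero => norm_num; linear_combination hD2
    | succ k ih =>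
      have h := hup ((k : ℤ) + 2) (by omega) (by omega)
      have e : (k : ℤ) + 2 + 1 = ((k : ℕ) + 1 : ℕ) + 2 := by push_cast; ring
      rw [e] at h
      have hc : ((k : ℂ) + 1) ≠ 0 := Nat.cast_add_one_ne_zero k
      refine mul_left_cancel₀ hc ?_
      push_cast at h ⊢
      linear_combination 2 * h + ((k : ℂ) + 2) * ih
  have hneg : ∀ n : ℕ, 2 * f (-(n : ℤ) - 2, -(-(n : ℤ) - 2))
      = (f (1, -1) - f (-1, 1)) * (-(n : ℂ) - 2) + (f (1, -1) + f (-1, 1)) := by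
    intro n
    induction n with
    | zero =>
      norm_num
      linear_combination hDm2
    | succ k ih =>
      have h := hdown (-(k : ℤ) - 2) (by omega) (by omega)
      have e : -(k : ℤ) - 2 - 1 = -((k : ℕ) + 1 : ℕ) - 2 := by push_cast; ring
      rw [e] at h
      have hc : (-(k : ℂ) - 1) ≠ 0 := by
        have : ((k : ℂ) + 1) ≠ 0 := Nat.cast_add_one_ne_zero k
        intro hcon; apply this; linear_combination -hcon
      refine mul_left_cancel₀ hc ?_
      push_cast at h ⊢
      linear_combination 2 * h - ((k : ℂ) + 2) * ih
  have hlin : ∀ u : ℤ, u ≠ 0 → 2 * f (u, -u)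
      = (f (1, -1) - f (-1, 1)) * (u : ℂ) + (f (1, -1) + f (-1, 1)) := by
    intro u hu
    rcases lt_or_ge u 0 with h | h
    · rcases eq_or_lt_of_le (show u ≤ -1 by omega) with h1 | h1
      · subst h1; norm_num; ring
      · have hn : ((-u - 2).toNat : ℤ) = -u - 2 := Int.toNat_of_nonneg (by omega)
        have hthis := hneg (-u - 2).toNat
        rw [hn] at hthis
        have e : -(-u - 2) - 2 = u := by ring
        rw [e] at hthis
        have hc : ((-u - 2).toNat : ℂ) = -(u : ℂ) - 2 := by exact_mod_cast hn
        linear_combination hthis - (f (1, -1) - f (-1, 1)) * hc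
    · rcases eq_or_lt_of_le (show 1 ≤ u by omega) with h1 | h1
      · have : u = 1 := h1.symm
        subst this; norm_num; ring
      · have hn : ((u - 2).toNat : ℤ) = u - 2 := Int.toNat_of_nonneg (by omega)
        have hthis := hpos (u - 2).toNat
        rw [hn] at hthis
        have e : u - 2 + 2 = u := by ring
        rw [e] at hthis
        have hc : ((u - 2).toNat : ℂ) = (u : ℂ) - 2 := by exact_mod_cast hn
        linear_combination hthis + (f (1, -1) - f (-1, 1)) * hc
  set A : ℂ := f (1, -1) - f (-1, 1) with hAdef
  set B : ℂ := f (1, -1) + f (-1, 1) with hBdef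
  -- off-diagonal values in terms of B
  have hE : ∀ m t : ℤ, m ≠ 0 → t ≠ 0 → m ≠ t →
      2 * (((m : ℂ) + t) * f (m, t)) = -B := by
    intro m t hm ht hmt
    have h0 := hFE m t hm ht hmt
    have h1 := hlin (m - t) (by omega)
    have h2 := hlin m hm
    have h3 := hlin (-t) (by omega)
    rw [neg_neg] at h3
    push_cast at h1 h2 h3
    linear_combination 2 * h0 + h1 - h2 - h3
  -- B = 0 via hf2
  have hB0 : B = 0 := by
    have e5 := hf2 1 2 4
    norm_num at e5
    have f1 : f (1, 6) = -B / 14 := by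
      have := hE 1 6 (by norm_num) (by norm_num) (by norm_num)
      push_cast at this
      linear_combination this / 14
    have f2 : f (2, 4) = -B / 12 := by
      have := hE 2 4 (by norm_num) (by norm_num) (by norm_num)
      push_cast at this
      linear_combination this / 12
    have f3 : f (2, 5) = -B / 14 := by
      have := hE 2 5 (by norm_num) (by norm_num) (by norm_num)
      push_cast at this
      linear_combination this / 14
    have f4 : f (1, 4) = -B / 10 := by
      have := hE 1 4 (by norm_num) (by norm_num) (by norm_num)
      push_cast at this
      linear_combination this / 10
    rw [f1, f2, f3, f4] at e5
    have hB2 : B ^ 2 = 0 := by linear_combination (-840 : ℂ) * e5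
    exact sq_eq_zero_iff.mp hB2
  -- diagonal values
  have hdiag : ∀ m : ℤ, f (m, -m) = A / 2 * m := by
    intro m
    by_cases hm : m = 0
    · subst hm
      simpa using hF0 0
    · have h := hlin m hm
      rw [hB0] at h
      linear_combination h / 2
  -- f (0, s) constant for s ≠ 0
  have hconst : ∀ s t : ℤ, s ≠ 0 → t ≠ 0 → f (0, t) = f (0, s) := by
    intro s t hs ht
    have h := hf1 0 (s - t) t
    have e1 : s - t + t = s := by ring
    rw [e1, zero_add, hgne (s - t) t (by omega)] at h
    refine mul_left_cancel₀ (cz t ht) ?_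
    push_cast at h
    linear_combination h
  -- f (t, t) in terms of f (0, t)
  have htt : ∀ t : ℤ, t ≠ 0 → 2 * f (t, t) = f (0, t) := by
    intro t ht
    have h := hA t t ht ht
    have e1 : t - t = 0 := by ring
    rw [e1] at h
    refine mul_left_cancel₀ (cz t ht) ?_
    push_cast at h ⊢
    linear_combination h
  -- (a - 2t) * f (t, t) = 0
  have hatt : ∀ t : ℤ, t ≠ 0 → (a - 2 * t) * (2 * (t : ℂ) * f (t, t)) = 0 := by
    intro t ht
    have h := hB t t ht
    have d1 := hdiag t
    have d2 : f (-t, t) = A / 2 * (-(t : ℂ)) := by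
      have := hdiag (-t)
      rw [neg_neg] at this
      push_cast at this
      linear_combination this
    rw [d1, d2] at h
    push_cast at h ⊢
    linear_combination h
  -- f (0, s) = 0 for s ≠ 0
  have h0s : ∀ s : ℤ, s ≠ 0 → f (0, s) = 0 := by
    intro s hs
    by_cases ha : a = 2
    · have h := hatt 2 (by norm_num)
      have hne : (a - 2 * ((2 : ℤ) : ℂ)) * (2 * ((2 : ℤ) : ℂ)) ≠ 0 := by
        push_cast
        rw [ha]
        norm_num
      have hft : f (2, 2) = 0 := by
        have h' : (a - 2 * ((2 : ℤ) : ℂ)) * (2 * ((2 : ℤ) : ℂ)) * f (2, 2) = 0 := by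
          linear_combination h
        exact (mul_eq_zero.mp h').resolve_left hne
      have := htt 2 (by norm_num)
      rw [hft] at this
      rw [hconst s 2 hs (by norm_num)] at this
      linear_combination -this
    · have h := hatt 1 (by norm_num)
      have hne : (a - 2 * ((1 : ℤ) : ℂ)) * (2 * ((1 : ℤ) : ℂ)) ≠ 0 := by
        push_cast
        intro hcon
        rcases mul_eq_zero.mp hcon with h' | h'
        · exact ha (by linear_combination h')
        · norm_num at h'
      have hft : f (1, 1) = 0 := by
        have h' : (a - 2 * ((1 : ℤ) : ℂ)) * (2 * ((1 : ℤ) : ℂ)) * f (1, 1) = 0 := by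
          linear_combination h
        exact (mul_eq_zero.mp h').resolve_left hne
      have := htt 1 (by norm_num)
      rw [hft] at this
      rw [hconst s 1 hs (by norm_num)] at this
      linear_combination -this
  refine ⟨A / 2, hdiag, ?_⟩
  intro m t hmt
  by_cases ht : t = 0
  · subst ht; exact hF0 m
  by_cases hm : m = 0
  · subst hm
    exact h0s t ht
  by_cases hmteq : m = t
  · subst hmteq
    have h := htt m hm
    rw [h0s m hm] at h
    linear_combination h / 2
  · have h := hE m t hm ht hmteq
    rw [hB0] at h
    have hne : (2 : ℂ) * ((m : ℂ) + t) ≠ 0 := by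
      apply mul_ne_zero two_ne_zero
      have := cz (m + t) hmt
      push_cast at this
      exact this
    have h' : (2 : ℂ) * ((m : ℂ) + t) * f (m, t) = 0 := by linear_combination h
    exact (mul_eq_zero.mp h').resolve_left hne
end

section
/- Define g : ℤ × ℤ → ℂ by g(n, t) = t for n + t ≠ 0 and g(n, −n) = 0. Suppose f : ℤ × ℤ → ℂ satisfies, for all m, n, t ∈ ℤ, both f(m,t)·g(n, m+t) − g(n,t)·f(m, n+t) = m·f(n+m, t) and f(n,t)·f(m, n+t) = f(m,t)·f(n, m+t). Then either there exists d ∈ ℂ such that f(m, −m) = d·m for all m and f(m, n) = 0 whenever m + n ≠ 0, or there exists c ∈ ℂ such that f(m, 0) = c for all m ≠ 0 and f(m, n) = 0 in all other cases (i.e. whenever n ≠ 0, and also f(0,0) = 0). -/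
/-- Final case of Theorem 3.5, where the Virasoro module is decomposable,
isomorphic to `𝒜'_{0,0} ⊕ ℂ v₀`: `f` is of type `Ũ_d` or of type `Ṽ_c`. -/
theorem stmt_11 (g : ℤ → ℤ → ℂ)
    (hg : ∀ n t : ℤ, g n t = if n + t = 0 then 0 else (t : ℂ))
    (f : ℤ × ℤ → ℂ)
    (hf1 : ∀ m n t : ℤ,
      f (m, t) * g n (m + t) - g n t * f (m, n + t) = m * f (n + m, t))
    (hf2 : ∀ m n t : ℤ, f (n, t) * f (m, n + t) = f (m, t) * f (n, m + t)) :
    (∃ d : ℂ,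
      (∀ m : ℤ, f (m, -m) = d * m) ∧
      (∀ m n : ℤ, m + n ≠ 0 → f (m, n) = 0)) ∨
    (∃ c : ℂ,
      (∀ m : ℤ, m ≠ 0 → f (m, 0) = c) ∧
      (∀ m n : ℤ, n ≠ 0 → f (m, n) = 0) ∧
      f (0, 0) = 0) := by
  -- cancellation helpers
  have hzc : ∀ (a : ℤ) (x : ℂ), a ≠ 0 → (a : ℂ) * x = 0 → x = 0 := by
    intro a x ha h
    rcases mul_eq_zero.mp h with h | h
    · exact absurd (Int.cast_eq_zero.mp h) ha
    · exact h
  have hcc : ∀ (a : ℤ) (x y : ℂ), a ≠ 0 → (a : ℂ) * x = (a : ℂ) * y → x = y := by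
    intro a x y ha h
    exact mul_left_cancel₀ (Int.cast_ne_zero.mpr ha) h
  -- E1 : (m+t) f(m,t) = m f(m-t,t)   for m ≠ 0
  have E1 : ∀ m t : ℤ, m ≠ 0 → ((m + t : ℤ) : ℂ) * f (m, t) = (m : ℂ) * f (m - t, t) := by
    intro m t hm
    have h := hf1 m (-t) t
    simp only [hg] at h
    rw [if_neg (by omega : ¬ (-t + (m + t) = 0)), if_pos (by ring : -t + t = 0)] at h
    rw [show -t + m = m - t by ring] at h
    linear_combination h
  -- R1 : f(-t, s) = f(s - 2t, t)  for t ≠ 0, s ≠ 0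
  have R1 : ∀ t s : ℤ, t ≠ 0 → s ≠ 0 → f (-t, s) = f (s - 2 * t, t) := by
    intro t s ht hs
    have h := hf1 (-t) (s - t) t
    rw [show -t + t = 0 by ring] at h
    simp only [hg, Int.cast_zero, ite_self] at h
    rw [if_neg (by omega : ¬ (s - t + t = 0))] at h
    rw [show s - t + t = s by ring, show s - t + -t = s - 2 * t by ring] at h
    refine hcc (-t) _ _ (by omega) ?_
    push_cast at h ⊢
    linear_combination h
  -- Z1 : f(-2t, t) = 0 for t ≠ 0
  have Z1 : ∀ t : ℤ, t ≠ 0 → f (-(2 * t), t) = 0 := by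
    intro t ht
    have h := hf1 (-t) (-t) t
    rw [show -t + t = 0 by ring] at h
    simp only [hg, Int.cast_zero, ite_self] at h
    rw [if_pos (by ring : -t + t = 0)] at h
    rw [show -t + -t = -(2 * t) by ring] at h
    refine hzc (-t) _ (by omega) ?_
    push_cast at h ⊢
    linear_combination -h
  -- G1 : (m+t) f(m,t) - t f(m,u) = m f(m+u-t, t)  for u ≠ 0, m + u ≠ 0
  have G1 : ∀ m t u : ℤ, u ≠ 0 → m + u ≠ 0 →
      ((m + t : ℤ) : ℂ) * f (m, t) - (t : ℂ) * f (m, u) = (m : ℂ) * f (m + u - t, t) := by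
    intro m t u hu hmu
    have h := hf1 m (u - t) t
    simp only [hg] at h
    rw [if_neg (by omega : ¬ (u - t + (m + t) = 0)), if_neg (by omega : ¬ (u - t + t = 0))] at h
    rw [show u - t + t = u by ring, show u - t + m = m + u - t by ring] at h
    linear_combination h
  -- f(0,0) = 0
  have hB0 : f (0, 0) = 0 := by
    have h := hf1 1 (-1) 0
    simp only [hg] at h
    rw [if_pos (by ring : -1 + (1 + 0) = 0), if_neg (by norm_num : ¬ ((-1 : ℤ) + 0 = 0))] at h
    rw [show (-1 : ℤ) + 1 = 0 by ring] at h
    push_cast at h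
    linear_combination -h
  -- hA : f(m, -m) = f(1,-1) * m
  have hA : ∀ m : ℤ, f (m, -m) = f (1, -1) * (m : ℂ) := by
    intro m
    by_cases hm : m = 0
    · subst hm
      simpa using hB0
    · have h := hf1 m (1 - m) (-1)
      simp only [hg] at h
      rw [if_pos (by ring : 1 - m + (m + -1) = 0),
          if_neg (by omega : ¬ (1 - m + -1 = 0))] at h
      rw [show 1 - m + -1 = -m by ring, show 1 - m + m = 1 by ring] at h
      push_cast at h
      linear_combination h
  -- hB : f(m,0) = f(1,0) for m ≠ 0
  have hB : ∀ m : ℤ, m ≠ 0 → f (m, 0) = f (1, 0) := by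
    intro m hm
    have h := hf1 m (1 - m) 0
    simp only [hg, add_zero, Int.cast_zero, ite_self] at h
    rw [if_neg (by omega : ¬ (1 - m + m = 0))] at h
    rw [show 1 - m + m = 1 by ring] at h
    exact hcc m _ _ hm (by linear_combination h)
  -- hC1 : f(0,t) = f(0,1) for t ≠ 0
  have hC1 : ∀ t : ℤ, t ≠ 0 → f (0, t) = f (0, 1) := by
    intro t ht
    have h := hf1 0 (1 - t) t
    simp only [hg, zero_add] at h
    rw [if_neg (by omega : ¬ (1 - t + t = 0))] at h
    rw [show 1 - t + t = 1 by ring] at h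
    exact hcc t _ _ ht (by push_cast at h ⊢; linear_combination h)
  -- he0 : f(0,1) = 0
  have he0 : f (0, 1) = 0 := by
    have h11 := E1 1 1 (by norm_num)
    have h21 := E1 2 1 (by norm_num)
    have h31 := E1 3 1 (by norm_num)
    have hG := G1 1 1 3 (by norm_num) (by norm_num)
    have hE13 := E1 1 3 (by norm_num)
    have hR23 := R1 2 3 (by norm_num) (by norm_num)
    have hR12 := R1 1 2 (by norm_num) (by norm_num)
    norm_num at h11 h21 h31 hG hE13 hR23 hR12
    linear_combination (-3/2 : ℂ) * h11 + (1/2 : ℂ) * h21 + (1/2 : ℂ) * h31 + 2 * hG +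
      (1/2 : ℂ) * hE13 + (1/2 : ℂ) * hR23 + (1/2 : ℂ) * hR12
  -- main vanishing result
  have key : ∀ N : ℕ, ∀ t : ℤ, t.natAbs ≤ N → t ≠ 0 → ∀ m : ℤ, m ≠ -t → f (m, t) = 0 := by
    intro N
    induction N with
    | zero =>
      intro t htN ht
      exact absurd (Int.natAbs_eq_zero.mp (Nat.le_zero.mp htN)) ht
    | succ N ih =>
      intro t htN ht
      have hf0t : f (0, t) = 0 := (hC1 t ht).trans he0
      -- multiples of t, nonnegative side
      have hup : ∀ j : ℕ, f ((j : ℤ) * t, t) = 0 := by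
        intro j
        induction j with
        | zero => simpa using hf0t
        | succ j ihj =>
          have ha : ((j : ℤ) + 1) * t ≠ 0 := mul_ne_zero (by omega) ht
          have h := E1 (((j : ℤ) + 1) * t) t ha
          rw [show ((j : ℤ) + 1) * t - t = (j : ℤ) * t by ring] at h
          rw [ihj, mul_zero] at h
          have hco : ((j : ℤ) + 1) * t + t ≠ 0 := by
            rw [show ((j : ℤ) + 1) * t + t = ((j : ℤ) + 2) * t by ring]
            exact mul_ne_zero (by omega) ht
          have h0 := hzc _ _ hco h
          rw [show (((j + 1 : ℕ)) : ℤ) = (j : ℤ) + 1 by push_cast; ring]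
          exact h0
      -- multiples of t, ≤ -2 side
      have hdn : ∀ j : ℕ, f ((-2 - (j : ℤ)) * t, t) = 0 := by
        intro j
        induction j with
        | zero => simpa [show ((-2 : ℤ) - 0) * t = -(2 * t) by ring] using Z1 t ht
        | succ j ihj =>
          have ha : (-2 - (j : ℤ)) * t ≠ 0 := mul_ne_zero (by omega) ht
          have h := E1 ((-2 - (j : ℤ)) * t) t ha
          rw [show (-2 - (j : ℤ)) * t - t = (-2 - ((j : ℤ) + 1)) * t by ring] at h
          rw [ihj, mul_zero] at h
          have h0 := hzc _ _ ha h.symm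
          rw [show (((j + 1 : ℕ)) : ℤ) = (j : ℤ) + 1 by push_cast; ring]
          rw [show (-2 - ((j : ℤ) + 1)) * t = (-2 - ((j : ℤ) + 1)) * t from rfl]
          exact h0
      have hmul : ∀ j : ℤ, j ≠ -1 → f (j * t, t) = 0 := by
        intro j hj
        rcases le_or_gt 0 j with hj0 | hj0
        · obtain ⟨k, rfl⟩ : ∃ k : ℕ, j = (k : ℤ) := ⟨j.toNat, by omega⟩
          exact hup k
        · obtain ⟨k, rfl⟩ : ∃ k : ℕ, j = -2 - (k : ℤ) := ⟨(-2 - j).toNat, by omega⟩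
          exact hdn k
      -- base case for non-multiples, via induction hypothesis on smaller |t|
      have hbase : ∀ a : ℤ, a ≠ 0 → a + t ≠ 0 → (a + t).natAbs ≤ N → f (a, t) = 0 := by
        intro a ha hat hsmall
        have h1 := E1 a t ha
        have h2 := R1 t (a + t) ht hat
        rw [show a + t - 2 * t = a - t by ring] at h2
        have h3 : f (-t, a + t) = 0 := by
          refine ih (a + t) hsmall hat (-t) ?_
          intro hcontra
          exact ha (by omega)
        rw [← h2, h3, mul_zero] at h1
        exact hzc (a + t) _ hat h1
      -- propagation along the congruence class mod t
      have hstepup : ∀ a : ℤ, ¬ t ∣ a → f (a, t) = 0 → f (a + t, t) = 0 := by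
        intro a hnd h0
        have hat : a + t ≠ 0 := fun hc => hnd ⟨-1, by omega⟩
        have h := E1 (a + t) t hat
        rw [show a + t - t = a by ring, h0, mul_zero] at h
        exact hzc (a + t + t) _ (fun hc => hnd ⟨-2, by omega⟩) h
      have hstepdn : ∀ a : ℤ, ¬ t ∣ a → f (a, t) = 0 → f (a - t, t) = 0 := by
        intro a hnd h0
        have ha : a ≠ 0 := fun hc => hnd (hc ▸ dvd_zero t)
        have h := E1 a t ha
        rw [h0, mul_zero] at h
        exact hzc a _ ha h.symm
      have hup2 : ∀ q : ℕ, ∀ a : ℤ, ¬ t ∣ a → f (a, t) = 0 → f (a + (q : ℤ) * t, t) = 0 := by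
        intro q
        induction q with
        | zero => intro a _ h0; simpa using h0
        | succ q ihq =>
          intro a hnd h0
          have hnd' : ¬ t ∣ (a + (q : ℤ) * t) := by
            intro hd
            rcases hd with ⟨k, hk⟩
            exact hnd ⟨k - q, by linarith [hk]⟩
          have h1 := hstepup _ hnd' (ihq a hnd h0)
          rw [show a + (q : ℤ) * t + t = a + (((q + 1 : ℕ)) : ℤ) * t by push_cast; ring] at h1
          exact h1
      have hdn2 : ∀ q : ℕ, ∀ a : ℤ, ¬ t ∣ a → f (a, t) = 0 → f (a - (q : ℤ) * t, t) = 0 := by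
        intro q
        induction q with
        | zero => intro a _ h0; simpa using h0
        | succ q ihq =>
          intro a hnd h0
          have hnd' : ¬ t ∣ (a - (q : ℤ) * t) := by
            intro hd
            rcases hd with ⟨k, hk⟩
            exact hnd ⟨k + q, by linarith [hk]⟩
          have h1 := hstepdn _ hnd' (ihq a hnd h0)
          rw [show a - (q : ℤ) * t - t = a - (((q + 1 : ℕ)) : ℤ) * t by push_cast; ring] at h1
          exact h1
      have hshift : ∀ a : ℤ, ¬ t ∣ a → f (a, t) = 0 → ∀ q : ℤ, f (a + q * t, t) = 0 := by
        intro a hnd h0 q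
        rcases le_or_gt 0 q with hq | hq
        · obtain ⟨k, rfl⟩ : ∃ k : ℕ, q = (k : ℤ) := ⟨q.toNat, by omega⟩
          exact hup2 k a hnd h0
        · obtain ⟨k, rfl⟩ : ∃ k : ℕ, q = -(k : ℤ) := ⟨(-q).toNat, by omega⟩
          rw [show a + -(k : ℤ) * t = a - (k : ℤ) * t by ring]
          exact hdn2 k a hnd h0
      -- conclude for arbitrary m
      intro m hm
      by_cases hdvd : t ∣ m
      · obtain ⟨j, rfl⟩ := hdvd
        rw [mul_comm t j]
        exact hmul j (fun hc => hm (by rw [hc]; ring))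
      · have hq := Int.emod_add_mul_ediv m t
        set r := m % t with hrdef
        have hr0 : 0 ≤ r := Int.emod_nonneg m ht
        have hrne : r ≠ 0 := fun hc => hdvd (Int.dvd_of_emod_eq_zero hc)
        rcases lt_or_gt_of_ne ht with htneg | htpos
        · -- t < 0, representative r
          have hrlt : r < -t := by
            have h1 : m % t = m % (-t) := by
              simp [Int.emod_neg m (-t)]
            rw [hrdef, h1]
            exact Int.emod_lt_of_pos m (by omega)
          have hrep : f (r, t) = 0 := hbase r hrne (by omega) (by omega)
          have hndr : ¬ t ∣ r := by
            intro hd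
            have h2 : -t ∣ r := (neg_dvd).mpr hd
            have h3 := Int.le_of_dvd (by omega) h2
            omega
          have h4 := hshift r hndr hrep (m / t)
          rw [show r + m / t * t = m by linarith [hq]] at h4
          exact h4
        · -- t > 0, representative r - t
          have hrlt : r < t := Int.emod_lt_of_pos m htpos
          have hrep : f (r - t, t) = 0 := hbase (r - t) (by omega) (by omega) (by omega)
          have hndr : ¬ t ∣ (r - t) := by
            intro hd
            have h2 : t ∣ r := by
              rcases hd with ⟨k, hk⟩
              exact ⟨k + 1, by linarith [hk]⟩
            have h3 := Int.le_of_dvd (by omega) h2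
            omega
          have h4 := hshift (r - t) hndr hrep (m / t + 1)
          rw [show r - t + (m / t + 1) * t = m by linarith [hq]] at h4
          exact h4
  have main : ∀ m t : ℤ, t ≠ 0 → m ≠ -t → f (m, t) = 0 := by
    intro m t ht hm
    exact key t.natAbs t le_rfl ht m hm
  -- dichotomy from hf2
  have hcd : f (1, -1) * f (1, 0) = 0 := by
    have h := hf2 2 1 (-1)
    have h20 : f (2, -1) = 0 := main 2 (-1) (by norm_num) (by norm_num)
    norm_num at h
    rw [h20, zero_mul] at h
    rw [← hB 2 (by norm_num)]
    exact h
  rcases mul_eq_zero.mp hcd with hd | hc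
  · -- d = 0 : type Ṽ_c
    right
    refine ⟨f (1, 0), fun m hm => hB m hm, ?_, hB0⟩
    intro m n hn
    by_cases hmn : m = -n
    · subst hmn
      have h := hA (-n)
      rw [neg_neg] at h
      rw [h, hd, zero_mul]
    · exact main m n hn (fun hc => hmn (by omega))
  · -- c = 0 : type Ũ_d
    left
    refine ⟨f (1, -1), fun m => by rw [hA m], ?_⟩
    intro m n hmn
    by_cases hn : n = 0
    · subst hn
      rw [hB m (by omega), hc]
    · exact main m n hn (fun hcontra => hmn (by omega))
end

section
/- Let a ∈ ℂ. Suppose f : ℤ × ℤ → ℂ satisfies, for all m, n, t ∈ ℤ, (a + t + m)·f(m,t) − (a + t)·f(m, n+t) = m·f(m+n, t). Then for every positive integer k and every integer m: (k·m + a)·f(k·m, 0) = k·(m + a)·f(m, 0) − (k − 1)·a·f(0, 0). -/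
/-!
Taking `t = 0` in the relation expresses `a * f (m, n)` through the values `f (·, 0)`.
Feeding this back into the relation with `n = -m` shows that
`m ↦ (a + m) * f (m, 0) - a * f (0, 0)` is additive on `ℤ`, hence `ℤ`-linear; the identity
is this linearity at `k * m`.
-/

section

variable {K : Type*} [CommRing K] (a : K) (f : ℤ × ℤ → K)

def coeffDefect (m : ℤ) : K := (a + m) * f (m, 0) - a * f (0, 0)

variable {a f}

lemma mul_apply_eq_of_relation
    (hf : ∀ m n t : ℤ, (a + t + m) * f (m, t) - (a + t) * f (m, n + t) = m * f (m + n, t))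
    (m n : ℤ) : a * f (m, n) = (a + m) * f (m, 0) - m * f (m + n, 0) := by
  have h := hf m n 0
  simp only [add_zero, Int.cast_zero] at h
  linear_combination -h

variable [IsDomain K] [CharZero K]

lemma coeffDefect_add
    (hf : ∀ m n t : ℤ, (a + t + m) * f (m, t) - (a + t) * f (m, n + t) = m * f (m + n, t))
    (m t : ℤ) : coeffDefect a f (m + t) = coeffDefect a f m + coeffDefect a f t := by
  rcases eq_or_ne m 0 with rfl | hm
  · simp [coeffDefect]
  have hmt := mul_apply_eq_of_relation hf m t
  have hm_t := mul_apply_eq_of_relation hf m (-m + t)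
  have h0t := mul_apply_eq_of_relation hf 0 t
  rw [add_neg_cancel_left] at hm_t
  have h := hf m (-m) t
  rw [add_neg_cancel] at h
  simp only [Int.cast_zero, add_zero, zero_mul, sub_zero, zero_add] at h0t
  apply mul_left_cancel₀ (Int.cast_ne_zero.mpr hm : (m : K) ≠ 0)
  unfold coeffDefect
  push_cast
  linear_combination (a + t + m) * hmt - (a + t) * hm_t - (m : K) * h0t - a * h

lemma coeffDefect_mul
    (hf : ∀ m n t : ℤ, (a + t + m) * f (m, t) - (a + t) * f (m, n + t) = m * f (m + n, t))
    (k m : ℤ) : coeffDefect a f (k * m) = k * coeffDefect a f m := by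
  simpa using map_zsmul (AddMonoidHom.mk' (coeffDefect a f) (coeffDefect_add hf)) k m

end

/-- Identity (3.24) in the proof of Lemma 3.4(ii). -/
theorem stmt_13 (a : ℂ) (f : ℤ × ℤ → ℂ)
    (hf : ∀ m n t : ℤ,
      (a + t + m) * f (m, t) - (a + t) * f (m, n + t) = m * f (m + n, t)) :
    ∀ k : ℤ, 0 < k → ∀ m : ℤ,
      ((k * m : ℤ) + a) * f (k * m, 0)
        = k * ((m : ℂ) + a) * f (m, 0) - ((k : ℂ) - 1) * a * f (0, 0) := by
  intro k _ m
  have h := coeffDefect_mul hf k m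
  unfold coeffDefect at h
  linear_combination h
end

section
/- Let a, b, c ∈ ℂ. Let V be the ℂ-vector space with basis {v_t : t ∈ ℤ} (e.g. the space of finitely supported functions ℤ → ℂ), with linear operators L(n)v_t = (a + t + b·n)v_{n+t} and I(n)v_t = c·v_{n+t} for n ∈ ℤ. Then every ℂ-subspace W ⊆ V with L(n)(W) ⊆ W and I(n)(W) ⊆ W for all n ∈ ℤ satisfies W = {0} or W = V, if and only if (a ∉ ℤ, or b ∉ {0, 1}, or c ≠ 0). -/
/-!
`L(0)` acts diagonally with the pairwise distinct eigenvalues `a + t`, so every nonzero invariant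
subspace contains some basis vector `v_t`. From `v_t` one reaches `v_s` either by `I(s - t)` when
`c ≠ 0`, or by `L(s - m) L(m - t)` for an intermediate `m`: each of the two coefficients is an
affine function of `m` that vanishes at most once unless `b = 0` and `a = -t`, resp. `b = 1` and
`a = -s`. Conversely, if `a = k ∈ ℤ` and `c = 0`, the vectors supported on `{-k}` (for `b = 0`)
or on its complement (for `b = 1`) form a nonzero proper invariant subspace.
-/

open Finsupp

theorem Submodule.mem_of_map_eq_smul {K V : Type*} [Field K] [AddCommGroup V] [Module K V]
    {W : Submodule K V} {T : V →ₗ[K] V} (hW : ∀ w ∈ W, T w ∈ W) {v u : V} {κ : K}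
    (hκ : κ ≠ 0) (hT : T v = κ • u) (hv : v ∈ W) : u ∈ W :=
  (W.smul_mem_iff hκ).mp (hT ▸ hW v hv)

theorem Int.subsingleton_setOf_add_mul_cast_eq_zero {K : Type*} [Field K] [CharZero K]
    {p q : K} (h : p ≠ 0 ∨ q ≠ 0) : {m : ℤ | p + q * m = 0}.Subsingleton := by
  intro m₁ hm₁ m₂ hm₂
  rcases eq_or_ne q 0 with rfl | hq
  · simp_all
  · exact_mod_cast mul_left_cancel₀ hq (add_left_cancel (hm₁.trans hm₂.symm))

namespace Finsupp

variable {R G : Type*}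

theorem apply_eq_of_map_single [CommSemiring R] [AddCommGroup G]
    {T : (G →₀ R) →ₗ[R] (G →₀ R)} {n : G} {κ : G → R}
    (hT : ∀ t, T (single t 1) = κ t • single (n + t) 1) (w : G →₀ R) (s : G) :
    T w s = κ (s - n) * w (s - n) := by
  induction w using Finsupp.induction_linear with
  | zero => simp
  | add f g hf hg => simp [hf, hg, mul_add]
  | single t x =>
    rw [← smul_single_one, map_smul, hT]
    rcases eq_or_ne t (s - n) with rfl | hne
    · simp [mul_comm]
    · have : n + t ≠ s := fun h => hne (eq_sub_of_add_eq' h)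
      simp [hne, this]

theorem supported_invariant [Semiring R] [AddCommGroup G]
    {T : (G →₀ R) →ₗ[R] (G →₀ R)} {n : G} {κ : G → R}
    (hT : ∀ t, T (single t 1) = κ t • single (n + t) 1) {S : Set G}
    (hS : ∀ t ∈ S, n + t ∉ S → κ t = 0) :
    ∀ w ∈ supported R R S, T w ∈ supported R R S := by
  suffices (supported R R S).map T ≤ supported R R S from fun w hw => this ⟨w, hw, rfl⟩
  rw [supported_eq_span_single, Submodule.map_span_le]
  rintro _ ⟨t, ht, rfl⟩
  rw [← supported_eq_span_single, hT]
  by_cases hnt : n + t ∈ S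
  · exact Submodule.smul_mem _ _ (single_mem_supported R 1 hnt)
  · simp [hS t ht hnt]

theorem not_supported_eq_bot_or_top [Semiring R] [Nontrivial R] {S : Set G}
    (hS : S.Nonempty) (hSc : Sᶜ.Nonempty) : ¬(supported R R S = ⊥ ∨ supported R R S = ⊤) := by
  obtain ⟨i, hi⟩ := hS
  obtain ⟨j, hj⟩ := hSc
  rintro (h | h)
  · have : single i (1 : R) ∈ supported R R S := single_mem_supported R 1 hi
    simp_all
  · have : single j (1 : R) ∈ supported R R S := by
      rw [h]
      exact Submodule.mem_top
    rw [mem_supported, support_single _ one_ne_zero] at this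
    exact hj (by simpa using this)

theorem eq_top_of_forall_single_one_mem [Semiring R] {W : Submodule R (G →₀ R)}
    (h : ∀ t, single t 1 ∈ W) : W = ⊤ := by
  rw [eq_top_iff, ← supported_univ, supported_eq_span_single, Submodule.span_le]
  rintro _ ⟨t, -, rfl⟩
  exact h t

theorem exists_single_one_mem_of_diagonal {K α : Type*} [Field K]
    {D : (α →₀ K) →ₗ[K] (α →₀ K)} {μ : α → K} (hμ : μ.Injective)
    (hD : ∀ w s, D w s = μ s * w s) {W : Submodule K (α →₀ K)} (hW : ∀ w ∈ W, D w ∈ W)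
    {w : α →₀ K} (hw : w ∈ W) (hw0 : w ≠ 0) : ∃ t, single t 1 ∈ W := by
  classical
  induction hn : w.support.card using Nat.strong_induction_on generalizing w with
  | _ n ih =>
  obtain ⟨t₁, ht₁⟩ := support_nonempty_iff.mpr hw0
  by_cases hsub : w.support ⊆ {t₁}
  · rw [support_subset_singleton.mp hsub, ← smul_single_one] at hw
    exact ⟨t₁, (W.smul_mem_iff (mem_support_iff.mp ht₁)).mp hw⟩
  obtain ⟨t₂, ht₂, hne⟩ : ∃ t₂ ∈ w.support, t₂ ≠ t₁ := by
    simpa [Finset.subset_iff, not_forall] using hsub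
  set w' := D w - μ t₂ • w
  have hw' : ∀ s, w' s = (μ s - μ t₂) * w s := fun s => by simp [w', hD, sub_mul]
  have hsupp : w'.support ⊆ w.support.erase t₂ := fun s hs => by
    simp only [mem_support_iff, hw', ne_eq, mul_eq_zero, not_or, sub_eq_zero] at hs
    exact Finset.mem_erase.mpr ⟨fun h => hs.1 (congrArg μ h), mem_support_iff.mpr hs.2⟩
  have hw't₁ : w' t₁ ≠ 0 := by
    rw [hw']
    exact mul_ne_zero (sub_ne_zero.mpr (hμ.ne hne.symm)) (mem_support_iff.mp ht₁)
  refine ih _ ?_ (w := w') (W.sub_mem (hW w hw) (W.smul_mem _ hw)) ?_ rfl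
  · exact hn ▸ (Finset.card_le_card hsupp).trans_lt (Finset.card_erase_lt_of_mem ht₂)
  · exact fun h => hw't₁ (by simp [h])

end Finsupp

section IntegralFamily

variable {K : Type*} [Field K] [CharZero K]

theorem exists_intermediate_index {a b : K} (h : (∀ k : ℤ, a ≠ k) ∨ (b ≠ 0 ∧ b ≠ 1))
    (t s : ℤ) :
    ∃ m : ℤ, a + t + b * ((m - t : ℤ) : K) ≠ 0 ∧ a + m + b * ((s - m : ℤ) : K) ≠ 0 := by
  have hp₁ : a + t - b * t ≠ 0 ∨ b ≠ 0 := by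
    by_contra! ⟨hp, rfl⟩
    refine h.elim (fun ha => ha (-t) ?_) (fun hb => hb.1 rfl)
    push_cast
    linear_combination hp
  have hp₂ : a + b * s ≠ 0 ∨ 1 - b ≠ 0 := by
    by_contra! ⟨hp, hb⟩
    obtain rfl : b = 1 := by linear_combination -hb
    refine h.elim (fun ha => ha (-s) ?_) (fun hb => hb.2 rfl)
    push_cast
    linear_combination hp
  obtain ⟨m, hm⟩ := ((Int.subsingleton_setOf_add_mul_cast_eq_zero hp₁).finite.union
    (Int.subsingleton_setOf_add_mul_cast_eq_zero hp₂).finite).infinite_compl.nonempty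
  simp only [Set.mem_compl_iff, Set.mem_union, Set.mem_ofPred_eq, not_or] at hm
  refine ⟨m, ?_, ?_⟩
  · convert hm.1 using 1
    push_cast
    ring
  · convert hm.2 using 1
    push_cast
    ring

theorem exists_proper_set_closed_under_shifts {b : K} (hb : b = 0 ∨ b = 1) (k : ℤ) :
    ∃ S : Set ℤ, S.Nonempty ∧ Sᶜ.Nonempty ∧
      ∀ n, ∀ t ∈ S, n + t ∉ S → (k : K) + t + b * n = 0 := by
  rcases hb with rfl | rfl
  · refine ⟨{-k}, ⟨-k, rfl⟩, ⟨1 - k, by simp⟩, ?_⟩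
    rintro n t rfl -
    push_cast
    ring
  · refine ⟨{-k}ᶜ, ⟨1 - k, by simp⟩, ⟨-k, by simp⟩, ?_⟩
    rintro n t - hnt
    rw [Set.notMem_compl_iff, Set.mem_singleton_iff] at hnt
    have : (n : K) + t = -k := by exact_mod_cast hnt
    linear_combination this

end IntegralFamily

theorem eq_top_of_invariant {a b c : ℂ} {L I : ℤ → (ℤ →₀ ℂ) →ₗ[ℂ] (ℤ →₀ ℂ)}
    (hL : ∀ n t : ℤ, L n (single t 1) = (a + t + b * n) • single (n + t) 1)
    (hI : ∀ n t : ℤ, I n (single t 1) = c • single (n + t) 1)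
    (h : (∀ k : ℤ, a ≠ k) ∨ (b ≠ 0 ∧ b ≠ 1) ∨ c ≠ 0) {W : Submodule ℂ (ℤ →₀ ℂ)}
    (hLW : ∀ n : ℤ, ∀ w ∈ W, L n w ∈ W) (hIW : ∀ n : ℤ, ∀ w ∈ W, I n w ∈ W) (hW : W ≠ ⊥) :
    W = ⊤ := by
  have hL₀ : ∀ w s, L 0 w s = (a + s) * w s := fun w s => by
    simp [apply_eq_of_map_single (hL 0)]
  obtain ⟨w, hw, hw0⟩ := (Submodule.ne_bot_iff W).mp hW
  obtain ⟨t, ht⟩ := exists_single_one_mem_of_diagonal (μ := fun s : ℤ => a + s)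
    (fun s₁ s₂ h => by simpa using h) hL₀ (hLW 0) hw hw0
  have hstep : ∀ {t s : ℤ}, a + t + b * ((s - t : ℤ) : ℂ) ≠ 0 →
      single t 1 ∈ W → single s 1 ∈ W := fun {t s} hκ =>
    Submodule.mem_of_map_eq_smul (hLW (s - t)) hκ (by rw [hL, sub_add_cancel])
  refine eq_top_of_forall_single_one_mem fun s => ?_
  rcases or_assoc.mpr h with hab | hc
  · obtain ⟨m, hm₁, hm₂⟩ := exists_intermediate_index hab t s
    exact hstep hm₂ (hstep hm₁ ht)
  · exact Submodule.mem_of_map_eq_smul (hIW (s - t)) hc (by rw [hI, sub_add_cancel]) ht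

/-- Simplicity criterion for `𝒜_{a,b,c}`: the module, realized on the space
`ℤ →₀ ℂ` with basis `{v_t = single t 1 : t ∈ ℤ}` and actions
`L(n)v_t = (a + t + b n)v_{n+t}`, `I(n)v_t = c v_{n+t}`, has no nonzero proper
invariant subspace if and only if `a ∉ ℤ`, or `b ∉ {0, 1}`, or `c ≠ 0`. -/
theorem stmt_15 (a b c : ℂ)
    (L I : ℤ → (ℤ →₀ ℂ) →ₗ[ℂ] (ℤ →₀ ℂ))
    (hL : ∀ n t : ℤ,
      L n (Finsupp.single t 1) = (a + t + b * n) • Finsupp.single (n + t) 1)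
    (hI : ∀ n t : ℤ,
      I n (Finsupp.single t 1) = c • Finsupp.single (n + t) 1) :
    (∀ W : Submodule ℂ (ℤ →₀ ℂ),
        (∀ n : ℤ, ∀ w ∈ W, L n w ∈ W) →
        (∀ n : ℤ, ∀ w ∈ W, I n w ∈ W) →
        W = ⊥ ∨ W = ⊤)
      ↔ ((∀ k : ℤ, a ≠ (k : ℂ)) ∨ (b ≠ 0 ∧ b ≠ 1) ∨ c ≠ 0) := by
  constructor
  · intro hsimple
    by_contra! ⟨⟨k, rfl⟩, hb, rfl⟩
    obtain ⟨S, hS, hSc, hLS⟩ := 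
      exists_proper_set_closed_under_shifts (or_iff_not_imp_left.mpr hb) k
    exact not_supported_eq_bot_or_top hS hSc <| hsimple _
      (fun n => supported_invariant (hL n) (hLS n)) (fun n => supported_invariant (hI n) (by simp))
  · intro h W hLW hIW
    exact or_iff_not_imp_left.mpr (eq_top_of_invariant hL hI h hLW hIW)
end
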